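/- arXiv:1010.3039 — 9 statements merged into one kernel-verified Lean document; each statement's English description precedes it below -/
import Mathlib

section
/- Let L be a regular n-variable language over a finite alphabet A. Then there exists a positive integer p such that for every tuple (w_1,...,w_n) in L with m := max_i |w_i| >= p, there exist integers k >= 1 and l >= 0 with k + l <= m such that, decomposing the i-th component of the padded string of (w_1,...,w_n) as u_i m_i v_i, where m_i consists of its k-th through (k+l)-th letters, the following hold: each m_i consists entirely of letters of A or entirely of padding symbols $, and for every r >= 1 the n-tuple of words obtained from (u_1 m_1^r v_1, ..., u_n m_n^r v_n) by deleting all $ symbols lies in L. -/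
/-! Let `C` be the number of states of a DFA recognising the padded extension and `m > (n + 1) C`
the length of the padded string of `w`. Then the `n + 1` numbers `0, |w 1|, …, |w n|` leave a gap:
some `a` among them has `a + C ≤ m` and no `|w i|` in `(a, a + C)`, so on positions `[a, a + C)`
every coordinate of the padded string is entirely letters or entirely `$`. Running the DFA's
pumping argument on the suffix starting at `a` finds a loop inside this window. The pumped strings
are accepted, so they are padded strings of tuples of `L`, and deleting the padding recovers those
tuples. -/

/-- The maximum length of the components of a tuple of words. -/
def maxLen {A : Type} {n : ℕ} (w : Fin n → List A) : ℕ :=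
  (Finset.univ : Finset (Fin n)).sup fun i => (w i).length

/-- The padded string of a tuple `(w 1, …, w n)`: the word of length `maxLen w`
over the padded alphabet (letters are tuples `Fin n → Option A`, with `none`
playing the role of the padding symbol `$`) whose `k`-th letter has `i`-th
coordinate the `k`-th letter of `w i`, or `$` past the end of `w i`. -/
def paddedString {A : Type} {n : ℕ} (w : Fin n → List A) : List (Fin n → Option A) :=
  (List.range (maxLen w)).map fun k i => (w i)[k]?

/-- Deleting all padding symbols from a word over the padded alphabet,
coordinate by coordinate. -/
def unpad {A : Type} {n : ℕ} (s : List (Fin n → Option A)) : Fin n → List A :=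
  fun i => s.filterMap fun σ => σ i

/-- An `n`-variable language over `A` is regular if its padded extension (the set
of padded strings of its elements) is a regular language over the padded alphabet. -/
def IsRegularTupleLang {A : Type} {n : ℕ} (L : Set (Fin n → List A)) : Prop :=
  Language.IsRegular { s : List (Fin n → Option A) | ∃ w ∈ L, s = paddedString w }

theorem List.filterMap_getElem?_range {α : Type*} (l : List α) {N : ℕ} (h : l.length ≤ N) :
    (List.range N).filterMap (fun k => l[k]?) = l := by
  induction l generalizing N with
  | nil => simp
  | cons a l ih =>
    obtain ⟨N, rfl⟩ : ∃ N', N = N' + 1 := ⟨N - 1, by simp at h; omega⟩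
    simp only [List.range_succ_eq_map, List.filterMap_cons, List.filterMap_map,
      Function.comp_def, List.getElem?_cons_zero, List.getElem?_cons_succ]
    rw [ih (by simpa using h)]

section Padding

variable {A : Type} {n : ℕ}

theorem length_le_maxLen (w : Fin n → List A) (i : Fin n) : (w i).length ≤ maxLen w :=
  Finset.le_sup (f := fun i => (w i).length) (Finset.mem_univ i)

@[simp]
theorem length_paddedString (w : Fin n → List A) : (paddedString w).length = maxLen w := by
  simp [paddedString]

theorem apply_of_getElem?_paddedString_eq_some {w : Fin n → List A} {j : ℕ}
    {σ : Fin n → Option A} (h : (paddedString w)[j]? = some σ) (i : Fin n) :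
    σ i = (w i)[j]? := by
  rw [paddedString, List.getElem?_map, Option.map_eq_some_iff] at h
  obtain ⟨k, hk, rfl⟩ := h
  obtain ⟨_, rfl⟩ := List.getElem?_eq_some_iff.1 hk
  simp

@[simp]
theorem unpad_paddedString (w : Fin n → List A) : unpad (paddedString w) = w := by
  funext i
  simp only [unpad, paddedString, List.filterMap_map, Function.comp_def]
  exact List.filterMap_getElem?_range (w i) (length_le_maxLen w i)

theorem paddedString_factor_coord_uniform {w : Fin n → List A}
    {u mid v : List (Fin n → Option A)} (h : paddedString w = u ++ mid ++ v) (i : Fin n)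
    (hi : (w i).length ≤ u.length ∨ u.length + mid.length ≤ (w i).length) :
    (∀ σ ∈ mid, σ i ≠ none) ∨ (∀ σ ∈ mid, σ i = none) := by
  have hcoord : ∀ σ ∈ mid, ∃ j < mid.length, σ i = (w i)[u.length + j]? := by
    intro σ hσ
    obtain ⟨j, hj, rfl⟩ := List.mem_iff_getElem.1 hσ
    refine ⟨j, hj, apply_of_getElem?_paddedString_eq_some ?_ i⟩
    rw [h, List.append_assoc, List.getElem?_append_right (by omega), Nat.add_sub_cancel_left,
      List.getElem?_append_left hj, List.getElem?_eq_getElem hj]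
  rcases hi with hi | hi
  · refine .inr fun σ hσ => ?_
    obtain ⟨j, -, hσi⟩ := hcoord σ hσ
    rw [hσi, List.getElem?_eq_none_iff]
    omega
  · refine .inl fun σ hσ => ?_
    obtain ⟨j, hj, hσi⟩ := hcoord σ hσ
    rw [hσi, ne_eq, List.getElem?_eq_none_iff]
    omega

end Padding

theorem Finset.exists_gap_of_card_mul_lt (T : Finset ℕ) (C m : ℕ) (h0 : 0 ∈ T)
    (hcard : T.card * C < m) : ∃ a ∈ T, a + C ≤ m ∧ ∀ t ∈ T, t ≤ a ∨ a + C ≤ t := by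
  by_contra! hgap
  -- each `x < m` lies less than `C` above the largest element of `T` below it
  have hcover : Finset.range m ⊆ T.biUnion fun t => Finset.Ico t (t + C) := by
    intro x hx
    have hne : (T.filter (· ≤ x)).Nonempty := ⟨0, Finset.mem_filter.2 ⟨h0, x.zero_le⟩⟩
    set a := (T.filter (· ≤ x)).max' hne
    obtain ⟨haT, hax⟩ := Finset.mem_filter.1 (Finset.max'_mem _ hne)
    refine Finset.mem_biUnion.2 ⟨a, haT, Finset.mem_Ico.2 ⟨hax, ?_⟩⟩
    by_contra! hxa
    obtain ⟨t, ht, hat, hta⟩ := hgap a haT (by rw [Finset.mem_range] at hx; omega)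
    have : t ≤ a := Finset.le_max' _ t (Finset.mem_filter.2 ⟨ht, by omega⟩)
    omega
  have := (Finset.card_le_card hcover).trans Finset.card_biUnion_le
  simp only [Finset.card_range, Nat.card_Ico, Nat.add_sub_cancel_left, Finset.sum_const,
    smul_eq_mul] at this
  omega

theorem DFA.pumping_lemma_after {α σ : Type*} [Fintype σ] (M : DFA α σ) {s : List α}
    (hs : s ∈ M.accepts) (a : ℕ) (hlen : a + Fintype.card σ ≤ s.length) :
    ∃ u mid v, s = u ++ mid ++ v ∧ a ≤ u.length ∧
      u.length + mid.length ≤ a + Fintype.card σ ∧ mid ≠ [] ∧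
      ∀ r, u ++ (List.replicate r mid).flatten ++ v ∈ M.accepts := by
  obtain ⟨q, x, y, z, hxyz, hxy, hy, hx, hyq, hz⟩ :=
    M.evalFrom_split (s := M.eval (s.take a)) (x := s.drop a) (t := M.eval s)
      (by rw [List.length_drop]; omega)
      (by rw [DFA.eval, ← DFA.evalFrom_of_append, List.take_append_drop])
  have hta : (s.take a).length = a := List.length_take_of_le (by omega)
  refine ⟨s.take a ++ x, y, z, ?_, by simp [hta], by simp [hta]; omega, hy, fun r => ?_⟩
  · conv_lhs => rw [← List.take_append_drop a s, hxyz]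
    simp only [List.append_assoc]
  · have hyr : (List.replicate r y).flatten ∈ KStar.kstar ({y} : Language α) :=
      Language.mem_kstar.2 ⟨_, rfl, fun _ h => List.eq_of_mem_replicate h⟩
    rw [DFA.mem_accepts, DFA.eval, DFA.evalFrom_of_append, DFA.evalFrom_of_append,
      DFA.evalFrom_of_append, ← DFA.eval, hx, M.evalFrom_of_pow hyq hyr, hz]
    exact hs

theorem pumping_regular_tuple_language_general {A : Type} {n : ℕ}
    (L : Set (Fin n → List A)) (hL : IsRegularTupleLang L) :
    ∃ p : ℕ, 0 < p ∧ ∀ w ∈ L, p ≤ maxLen w →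
      ∃ k l : ℕ, 1 ≤ k ∧ k + l ≤ maxLen w ∧
        ∃ u mid v : List (Fin n → Option A),
          paddedString w = u ++ mid ++ v ∧
          u.length = k - 1 ∧ mid.length = l + 1 ∧
          (∀ i : Fin n, (∀ σ ∈ mid, σ i ≠ none) ∨ (∀ σ ∈ mid, σ i = none)) ∧
          ∀ r : ℕ, 1 ≤ r → unpad (u ++ (List.replicate r mid).flatten ++ v) ∈ L := by
  obtain ⟨σ, _, M, hM⟩ := hL
  refine ⟨(n + 1) * Fintype.card σ + 1, Nat.succ_pos _, fun w hw hm => ?_⟩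
  set T := insert 0 (Finset.univ.image fun i => (w i).length)
  have hT : T.card ≤ n + 1 := (Finset.card_insert_le _ _).trans
    (by simpa using Finset.card_image_le (s := Finset.univ) (f := fun i => (w i).length))
  obtain ⟨a, -, haC, hgap⟩ := T.exists_gap_of_card_mul_lt (Fintype.card σ) (maxLen w)
    (Finset.mem_insert_self _ _) (by nlinarith)
  have hacc : paddedString w ∈ M.accepts := hM ▸ ⟨w, hw, rfl⟩
  obtain ⟨u, mid, v, hsplit, hau, hmida, hmid, hpump⟩ :=
    M.pumping_lemma_after hacc a (by simpa using haC)
  have hlen := congrArg List.length hsplit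
  have hmid_pos := List.length_pos_of_ne_nil hmid
  simp only [length_paddedString, List.length_append] at hlen
  refine ⟨u.length + 1, mid.length - 1, by omega, by omega, u, mid, v, hsplit, by omega, by omega,
    fun i => paddedString_factor_coord_uniform hsplit i ?_, fun r _ => ?_⟩
  · rcases hgap _ (Finset.mem_insert_of_mem (Finset.mem_image_of_mem _ (Finset.mem_univ i)))
      with h | h <;> omega
  · obtain ⟨w', hw', hw'eq⟩ := hM ▸ hpump r
    rw [hw'eq, unpad_paddedString]
    exact hw'

/-- **Pumping lemma for regular `n`-variable languages** (Lemma 2.13 of the paper).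
If `L` is a regular `n`-variable language over a finite alphabet `A`, there is a
positive integer `p` such that every `w ∈ L` whose maximal component length `m` is
at least `p` admits `k ≥ 1`, `l ≥ 0` with `k + l ≤ m` such that, splitting the
padded string of `w` as `u ++ mid ++ v` where `mid` occupies positions `k` through
`k + l` (so `|u| = k - 1` and `|mid| = l + 1`), each coordinate of `mid` consists
entirely of letters of `A` or entirely of padding symbols, and for every `r ≥ 1`
the tuple obtained from `u ++ mid^r ++ v` by deleting all padding symbols is in `L`. -/
theorem pumping_regular_tuple_language {A : Type} [Fintype A] {n : ℕ} (hn : 1 ≤ n)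
    (L : Set (Fin n → List A)) (hL : IsRegularTupleLang L) :
    ∃ p : ℕ, 0 < p ∧ ∀ w ∈ L, p ≤ maxLen w →
      ∃ k l : ℕ, 1 ≤ k ∧ k + l ≤ maxLen w ∧
        ∃ u mid v : List (Fin n → Option A),
          paddedString w = u ++ mid ++ v ∧
          u.length = k - 1 ∧ mid.length = l + 1 ∧
          (∀ i : Fin n, (∀ σ ∈ mid, σ i ≠ none) ∨ (∀ σ ∈ mid, σ i = none)) ∧
          ∀ r : ℕ, 1 ≤ r → unpad (u ++ (List.replicate r mid).flatten ++ v) ∈ L :=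
  pumping_regular_tuple_language_general L hL
end

section
/- For every finite alphabet A, every n >= 1, and every n-variable language L over A, L is accepted by some n-tape sorted asynchronous automaton over A if and only if L is accepted by some n-tape semi-sorted asynchronous automaton over A. -/
/-- An `n`-tape semi-sorted (deterministic) asynchronous automaton over `A`:
a partial deterministic finite state automaton over `A ∪ {$}` (unique start state,
no `ε`-transitions, at most one transition from each state for each letter; the
padding symbol `$` is modelled by `none : Option A`), together with a partition of
its states into `n` sets (recorded by `tape`, where `tape s = i` means `s ∈ S_i`). -/
structure SemiSortedAA (A : Type) (n : ℕ) where
  State : Type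
  fintype : Fintype State
  start : State
  accept : Set State
  /-- partial deterministic transition function over the alphabet `A ∪ {$}` -/
  step : State → Option A → Option State
  /-- the index `i` such that the state lies in `S_i` -/
  tape : State → Fin n

namespace SemiSortedAA

variable {A : Type} {n : ℕ}

/-- `M.Run s r f` : starting in state `s` with remaining (still unread) content `r i`
on the `i`-th tape, the automaton can consume all the remaining content and end in
state `f`, where from a state `s` it reads the next letter of tape `M.tape s`.
This is exactly the existence of a shuffle of the tape contents labelling a path
from `s` to `f` in which every letter originating from the `i`-th tape is read
while the automaton is in a state of `S_i`. -/
inductive Run (M : SemiSortedAA A n) :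
    M.State → (Fin n → List (Option A)) → M.State → Prop
  | nil (s : M.State) : Run M s (fun _ => []) s
  | step {s t f : M.State} {c : Option A} {rest : List (Option A)}
      {r : Fin n → List (Option A)}
      (h : M.step s c = some t)
      (hr : r (M.tape s) = c :: rest)
      (hrun : Run M t (Function.update r (M.tape s) rest) f) :
      Run M s r f

/-- `M` accepts the tuple of words `(w 1, …, w n)` if some shuffle of
`(w 1 $, …, w n $)` labels a path from the start state to an accept state,
each letter from the `i`-th word (including its terminal `$`) being read in `S_i`. -/
def Accepts (M : SemiSortedAA A n) (w : Fin n → List A) : Prop :=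
  ∃ f ∈ M.accept, M.Run M.start (fun i => (w i).map some ++ [none]) f

end SemiSortedAA

/-- An `n`-variable language is quasi-regular if it is the language accepted by some
`n`-tape semi-sorted asynchronous automaton. -/
def IsQuasiRegular {A : Type} {n : ℕ} (L : Set (Fin n → List A)) : Prop :=
  ∃ M : SemiSortedAA A n, ∀ w, w ∈ L ↔ M.Accepts w

/-- An `n`-tape sorted asynchronous automaton over `A` (a partial deterministic
finite state automaton over `A ∪ {$}`, with `$` modelled by `none : Option A`).
`sort s = some (i, V)` means `s ∈ S_i^V`, and `sort s = none` means that `s` is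
the unique element of `S_f`, which is the unique accept state. -/
structure SortedAA (A : Type) (n : ℕ) where
  State : Type
  fintype : Fintype State
  start : State
  /-- the unique element of `S_f`, which is also the unique accept state -/
  final : State
  /-- partial deterministic transition function over the alphabet `A ∪ {$}` -/
  step : State → Option A → Option State
  /-- the sorting of the states: `some (i, V)` means the state is in `S_i^V` -/
  sort : State → Option (Fin n × Finset (Fin n))
  /-- `S_f` consists exactly of the final state -/
  sort_final : ∀ s, sort s = none ↔ s = final
  /-- states of `S_i^V` require `i ∉ V` (so in particular `V` is proper) -/
  sort_mem : ∀ s i V, sort s = some (i, V) → i ∉ V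
  /-- the start state lies in some `S_i^∅` -/
  start_sort : ∃ i, sort start = some (i, (∅ : Finset (Fin n)))
  /-- no transitions leave the final state -/
  step_final : ∀ c, step final c = none
  /-- a `$`-transition goes from `S_i^V` to some `S_j^{V ∪ {i}}` with `j ≠ i`,
  or to the final state when `V ∪ {i} = {1, …, n}`; together with `letter_step`
  this says that a transition is labelled `$` exactly when it goes from a set
  `S_i^V` to a set `S_j^{V ∪ {i}}` (or to `S_f`) -/
  dollar_step : ∀ s t, step s none = some t →
    ∃ i V, sort s = some (i, V) ∧
      ((insert i V = (Finset.univ : Finset (Fin n)) ∧ t = final) ∨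
        (∃ j W, sort t = some (j, W) ∧ j ≠ i ∧ W = insert i V))
  /-- a non-`$`-transition from a state of `S_i^V` ends in some `S_j^V` with `j ∉ V` -/
  letter_step : ∀ s t a, step s (some a) = some t →
    ∃ i V j, sort s = some (i, V) ∧ sort t = some (j, V) ∧ j ∉ V

namespace SortedAA

variable {A : Type} {n : ℕ}

/-- Runs of a sorted asynchronous automaton: in a state of `S_i^V` the automaton
reads the next remaining letter of the `i`-th tape.  `M.Run s r f` is the existence
of a shuffle of the remaining tape contents labelling a path from `s` to `f` in
which each letter originating from the `i`-th tape is read in a state of some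
`S_i^V`. -/
inductive Run (M : SortedAA A n) :
    M.State → (Fin n → List (Option A)) → M.State → Prop
  | nil (s : M.State) : Run M s (fun _ => []) s
  | step {s t f : M.State} {c : Option A} {rest : List (Option A)}
      {r : Fin n → List (Option A)} {i : Fin n} {V : Finset (Fin n)}
      (hs : M.sort s = some (i, V))
      (h : M.step s c = some t)
      (hr : r i = c :: rest)
      (hrun : Run M t (Function.update r i rest) f) :
      Run M s r f

/-- Acceptance for sorted asynchronous automata: some shuffle of
`(w 1 $, …, w n $)` labels a path from the start state to the accept state. -/
def Accepts (M : SortedAA A n) (w : Fin n → List A) : Prop :=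
  M.Run M.start (fun i => (w i).map some ++ [none]) M.final

end SortedAA

/-!
Forgetting the superscripts `V` turns a sorted automaton into a semi-sorted one with the
same runs, since no transition leaves its accept state. Conversely, a semi-sorted
automaton `M` is simulated by the sorted automaton whose states are pairs `(s, V)`, where
`V` is the set of tapes whose `$` has already been read, placed in `S_{tape s}^V`, plus a
new final state. Reading `$` on tape `i` moves from `V` to `V ∪ {i}`; once every tape is
exhausted the simulation enters the final state iff `M` has reached an accept state.
On a run over padded words, the tape about to be read is never exhausted, which is
exactly the sortedness constraint.
-/

namespace SortedAA

variable {A : Type} {n : ℕ} (M : SortedAA A n)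

lemma exists_sort_of_step {s t : M.State} {c : Option A} (h : M.step s c = some t) :
    ∃ i V, M.sort s = some (i, V) := by
  cases c with
  | none => obtain ⟨i, V, hs, -⟩ := M.dollar_step s t h; exact ⟨i, V, hs⟩
  | some a => obtain ⟨i, V, -, hs, -⟩ := M.letter_step s t a h; exact ⟨i, V, hs⟩

lemma Run.eq_nil_of_final {r : Fin n → List (Option A)} {f : M.State}
    (h : M.Run M.final r f) : r = fun _ => [] := by
  cases h with
  | nil => rfl
  | step hs => simp [(M.sort_final _).2 rfl] at hs

/-- The accept state lies in no `S_i^V`; it is put on the arbitrary tape `i₀`. -/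
def toSemiSorted (i₀ : Fin n) : SemiSortedAA A n where
  State := M.State
  fintype := M.fintype
  start := M.start
  accept := {M.final}
  step := M.step
  tape s := (M.sort s).elim i₀ Prod.fst

lemma toSemiSorted_tape (i₀ : Fin n) {s : M.State} {i : Fin n} {V : Finset (Fin n)}
    (hs : M.sort s = some (i, V)) : (M.toSemiSorted i₀).tape s = i := by
  simp [toSemiSorted, hs]

lemma run_toSemiSorted_iff (i₀ : Fin n) {s f : (M.toSemiSorted i₀).State}
    {r : Fin n → List (Option A)} :
    (M.toSemiSorted i₀).Run s r f ↔ M.Run s r f := by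
  constructor
  · intro h
    induction h with
    | nil s => exact .nil s
    | step hstep hr _ ih =>
      obtain ⟨i, V, hs⟩ := M.exists_sort_of_step hstep
      rw [M.toSemiSorted_tape i₀ hs] at hr ih
      exact .step hs hstep hr ih
  · intro h
    induction h with
    | nil s => exact .nil (M := M.toSemiSorted i₀) s
    | @step s t f c rest r i V hs hstep hr _ ih =>
      refine .step (M := M.toSemiSorted i₀) (rest := rest) hstep ?_ ?_ <;>
        rwa [M.toSemiSorted_tape i₀ hs]

lemma accepts_toSemiSorted_iff (i₀ : Fin n) (w : Fin n → List A) :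
    (M.toSemiSorted i₀).Accepts w ↔ M.Accepts w := by
  constructor
  · rintro ⟨f, rfl, h⟩
    exact (M.run_toSemiSorted_iff i₀).1 h
  · intro h
    exact ⟨M.final, rfl, (M.run_toSemiSorted_iff i₀).2 h⟩

end SortedAA

namespace SemiSortedAA

variable {A : Type} {n : ℕ}

def doneTapes {α : Type*} (r : Fin n → List α) : Finset (Fin n) :=
  Finset.univ.filter fun i => r i = []

@[simp]
lemma mem_doneTapes {α : Type*} {r : Fin n → List α} {i : Fin n} :
    i ∈ doneTapes r ↔ r i = [] := by
  simp [doneTapes]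

lemma doneTapes_update_nil {α : Type*} (r : Fin n → List α) (i : Fin n) :
    doneTapes (Function.update r i []) = insert i (doneTapes r) := by
  ext k
  rcases eq_or_ne k i with rfl | hk <;> simp [*]

lemma doneTapes_update_of_ne_nil {α : Type*} {r : Fin n → List α} {i : Fin n}
    {l : List α} (hl : l ≠ []) (hi : r i ≠ []) :
    doneTapes (Function.update r i l) = doneTapes r := by
  ext k
  rcases eq_or_ne k i with rfl | hk <;> simp [*]

lemma Run.eq_of_forall_nil {M : SemiSortedAA A n} {s f : M.State} {r : Fin n → List (Option A)}
    (h : M.Run s r f) (hr : ∀ i, r i = []) : f = s := by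
  cases h with
  | nil => rfl
  | step _ hrc => simp [hr] at hrc

lemma Run.tape_notMem_doneTapes {M : SemiSortedAA A n} {s f : M.State}
    {r : Fin n → List (Option A)} (h : M.Run s r f) {i : Fin n} (hi : r i ≠ []) :
    M.tape s ∉ doneTapes r := by
  cases h with
  | nil => exact absurd rfl hi
  | step _ hrc => simp [hrc]

/-- The nonempty suffixes of a padded word `w $` are the words `u $`. -/
def IsPaddedSuffix (l : List (Option A)) : Prop :=
  l = [] ∨ ∃ u : List A, l = u.map some ++ [none]

lemma IsPaddedSuffix.cons {c : Option A} {rest : List (Option A)}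
    (h : IsPaddedSuffix (c :: rest)) :
    (c = none ∧ rest = []) ∨
      ∃ (a : A) (u : List A), c = some a ∧ rest = u.map some ++ [none] := by
  obtain h | ⟨_ | ⟨a, u⟩, h⟩ := h <;> simp_all

lemma IsPaddedSuffix.tail {c : Option A} {rest : List (Option A)}
    (h : IsPaddedSuffix (c :: rest)) : IsPaddedSuffix rest := by
  rcases h.cons with ⟨-, rfl⟩ | ⟨a, u, -, rfl⟩
  · exact .inl rfl
  · exact .inr ⟨u, rfl⟩

variable (M : SemiSortedAA A n)

open Classical in
/-- The state `none` is the final state of `M.toSorted`. -/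
noncomputable def toSortedStep :
    Option (M.State × Finset (Fin n)) → Option A → Option (Option (M.State × Finset (Fin n)))
  | none, _ => none
  | some (s, V), some a =>
      if M.tape s ∈ V then none else
      (M.step s (some a)).bind fun t => if M.tape t ∈ V then none else some (some (t, V))
  | some (s, V), none =>
      if M.tape s ∈ V then none else
      (M.step s none).bind fun t =>
        if insert (M.tape s) V = Finset.univ then (if t ∈ M.accept then some none else none)
        else if M.tape t ∈ insert (M.tape s) V then none
        else some (some (t, insert (M.tape s) V))

lemma toSortedStep_letter_eq_some {s : M.State} {V : Finset (Fin n)} {a : A}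
    {p : Option (M.State × Finset (Fin n))} :
    M.toSortedStep (some (s, V)) (some a) = some p ↔
      M.tape s ∉ V ∧
        ∃ t, M.step s (some a) = some t ∧ M.tape t ∉ V ∧ p = some (t, V) := by
  simp only [toSortedStep]
  split_ifs <;> cases M.step s (some a) <;> simp_all [eq_comm]

lemma toSortedStep_dollar_eq_some {s : M.State} {V : Finset (Fin n)}
    {p : Option (M.State × Finset (Fin n))} :
    M.toSortedStep (some (s, V)) none = some p ↔
      M.tape s ∉ V ∧ ∃ t, M.step s none = some t ∧
        ((insert (M.tape s) V = Finset.univ ∧ t ∈ M.accept ∧ p = none) ∨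
          (insert (M.tape s) V ≠ Finset.univ ∧ M.tape t ∉ insert (M.tape s) V ∧
            p = some (t, insert (M.tape s) V))) := by
  simp only [toSortedStep]
  split_ifs <;> cases M.step s none <;> simp_all [eq_comm]

noncomputable def toSorted : SortedAA A n where
  State := Option (M.State × Finset (Fin n))
  fintype := have := M.fintype; inferInstance
  start := some (M.start, ∅)
  final := none
  step := M.toSortedStep
  sort := Option.map fun p : M.State × Finset (Fin n) => (M.tape p.1, p.2.erase (M.tape p.1))
  sort_final _ := Option.map_eq_none_iff
  sort_mem := by
    rintro (_ | ⟨s, V⟩) i W h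
    · cases h
    simp only [Option.map_some, Option.some.injEq, Prod.mk.injEq] at h
    obtain ⟨rfl, rfl⟩ := h
    exact Finset.notMem_erase (M.tape s) V
  start_sort := ⟨M.tape M.start, by simp⟩
  step_final _ := rfl
  dollar_step := by
    rintro (_ | ⟨s, V⟩) p h
    · cases h
    obtain ⟨hs, t, -, ⟨hU, -, rfl⟩ | ⟨-, ht, rfl⟩⟩ := M.toSortedStep_dollar_eq_some.1 h
    · exact ⟨M.tape s, V, by simp [hs], .inl ⟨hU, rfl⟩⟩
    · refine ⟨M.tape s, V, by simp [hs], .inr ⟨M.tape t, _, by simp [ht], ?_, rfl⟩⟩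
      exact fun h => ht (h ▸ Finset.mem_insert_self _ _)
  letter_step := by
    rintro (_ | ⟨s, V⟩) p a h
    · cases h
    obtain ⟨hs, t, -, ht, rfl⟩ := M.toSortedStep_letter_eq_some.1 h
    exact ⟨M.tape s, V, M.tape t, by simp [hs], by simp [ht], ht⟩

lemma toSorted_sort {s : M.State} {V : Finset (Fin n)} (hs : M.tape s ∉ V) :
    M.toSorted.sort (some (s, V)) = some (M.tape s, V) := by
  simp [toSorted, Finset.erase_eq_of_notMem hs]

lemma toSorted_run_of_run {s f : M.State} {r : Fin n → List (Option A)} (h : M.Run s r f)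
    (hf : f ∈ M.accept) (hr : ∀ i, IsPaddedSuffix (r i)) {i₀ : Fin n}
    (hi₀ : r i₀ ≠ []) :
    M.toSorted.Run (some (s, doneTapes r)) r none := by
  induction h generalizing i₀ with
  | nil s => exact absurd rfl hi₀
  | @step s t f c rest r hstep hrc hrun ih =>
    have hs : M.tape s ∉ doneTapes r := by simp [hrc]
    have hr' : ∀ k, IsPaddedSuffix (Function.update r (M.tape s) rest k) := by
      intro k
      rcases eq_or_ne k (M.tape s) with rfl | hk
      · simpa using (hrc ▸ hr (M.tape s)).tail
      · simpa [hk] using hr k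
    rcases (hrc ▸ hr (M.tape s)).cons with ⟨rfl, rfl⟩ | ⟨a, u, rfl, rfl⟩
    · have hdone := doneTapes_update_nil r (M.tape s)
      by_cases hU : insert (M.tape s) (doneTapes r) = Finset.univ
      · have hnil : ∀ k, Function.update r (M.tape s) [] k = [] := by
          simpa [← hdone, Finset.eq_univ_iff_forall] using hU
        rw [hrun.eq_of_forall_nil hnil] at hf
        refine .step (c := none) (t := none) (M.toSorted_sort hs)
          (M.toSortedStep_dollar_eq_some.2 ⟨hs, t, hstep, .inl ⟨hU, hf, rfl⟩⟩) hrc ?_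
        rw [funext hnil]
        exact .nil _
      · obtain ⟨j, hj⟩ : ∃ j, Function.update r (M.tape s) [] j ≠ [] := by
          simpa [← hdone, Finset.eq_univ_iff_forall] using hU
        have ht : M.tape t ∉ insert (M.tape s) (doneTapes r) :=
          hdone ▸ hrun.tape_notMem_doneTapes hj
        refine .step (c := none) (M.toSorted_sort hs)
          (M.toSortedStep_dollar_eq_some.2 ⟨hs, t, hstep, .inr ⟨hU, ht, rfl⟩⟩) hrc ?_
        rw [← hdone]
        exact ih hf hr' hj
    · have hrest : Function.update r (M.tape s) (u.map some ++ [none]) (M.tape s) ≠ [] := by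
        simp
      have hdone : doneTapes (Function.update r (M.tape s) (u.map some ++ [none])) =
          doneTapes r :=
        doneTapes_update_of_ne_nil (by simp) (hrc ▸ List.cons_ne_nil _ _)
      have ht : M.tape t ∉ doneTapes r := hdone ▸ hrun.tape_notMem_doneTapes hrest
      refine .step (c := some a) (M.toSorted_sort hs)
        (M.toSortedStep_letter_eq_some.2 ⟨hs, t, hstep, ht, rfl⟩) hrc ?_
      rw [← hdone]
      exact ih hf hr' hrest

lemma exists_run_of_toSorted_run {p q : M.toSorted.State} {r : Fin n → List (Option A)}
    (h : M.toSorted.Run p r q) (hq : q = none) {s : M.State} {V : Finset (Fin n)}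
    (hp : p = some (s, V)) : ∃ f ∈ M.accept, M.Run s r f := by
  induction h generalizing s V with
  | nil => simp_all
  | @step p' p'' q c rest r i W hsort hstep hrc hrun ih =>
    subst hp
    obtain rfl : i = M.tape s := by
      simp only [toSorted, Option.map_some, Option.some.injEq, Prod.mk.injEq] at hsort
      exact hsort.1.symm
    cases c with
    | some a =>
      obtain ⟨-, t, hst, -, rfl⟩ := M.toSortedStep_letter_eq_some.1 hstep
      obtain ⟨f, hf, hrun'⟩ := ih hq rfl
      exact ⟨f, hf, .step hst hrc hrun'⟩
    | none =>
      obtain ⟨-, t, hst, ⟨-, ht, rfl⟩ | ⟨-, -, rfl⟩⟩ :=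
        M.toSortedStep_dollar_eq_some.1 hstep
      · refine ⟨t, ht, .step hst hrc ?_⟩
        rw [hrun.eq_nil_of_final]
        exact .nil t
      · obtain ⟨f, hf, hrun'⟩ := ih hq rfl
        exact ⟨f, hf, .step hst hrc hrun'⟩

lemma accepts_toSorted_iff (w : Fin n → List A) : M.toSorted.Accepts w ↔ M.Accepts w := by
  constructor
  · intro h
    exact M.exists_run_of_toSorted_run h rfl rfl
  · rintro ⟨f, hf, h⟩
    show M.toSorted.Run (some (M.start, ∅)) _ none
    have hpad : ∀ i, IsPaddedSuffix ((w i).map some ++ [none]) := fun i => .inr ⟨w i, rfl⟩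
    simpa [doneTapes] using M.toSorted_run_of_run h hf hpad (i₀ := M.tape M.start) (by simp)

end SemiSortedAA

theorem sorted_iff_semiSorted_general {A : Type} {n : ℕ}
    (L : Set (Fin n → List A)) :
    (∃ M : SortedAA A n, ∀ w, w ∈ L ↔ M.Accepts w) ↔
      (∃ M : SemiSortedAA A n, ∀ w, w ∈ L ↔ M.Accepts w) := by
  constructor
  · rintro ⟨M, hM⟩
    obtain ⟨i₀, -⟩ := M.start_sort
    exact ⟨M.toSemiSorted i₀, fun w => (hM w).trans (M.accepts_toSemiSorted_iff i₀ w).symm⟩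
  · rintro ⟨M, hM⟩
    exact ⟨M.toSorted, fun w => (hM w).trans (M.accepts_toSorted_iff w).symm⟩

/-- Sorted and semi-sorted asynchronous automata accept the same class of languages:
an `n`-variable language over a finite alphabet is accepted by some `n`-tape sorted
asynchronous automaton iff it is accepted by some `n`-tape semi-sorted asynchronous
automaton. -/
theorem sorted_iff_semiSorted {A : Type} [Fintype A] {n : ℕ} (hn : 1 ≤ n)
    (L : Set (Fin n → List A)) :
    (∃ M : SortedAA A n, ∀ w, w ∈ L ↔ M.Accepts w) ↔
      (∃ M : SemiSortedAA A n, ∀ w, w ∈ L ↔ M.Accepts w) :=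
  sorted_iff_semiSorted_general L
end

section
/- Let L be an n-variable language over a finite alphabet A. The following are equivalent: (i) L is the language accepted by some n-tape non-deterministic filter asynchronous automaton (FAA) over A; (ii) L is the language accepted by some deterministic-filter asynchronous automaton (DFAA) over A; (iii) L is the language accepted by some n-tape non-deterministic semi-sorted asynchronous automaton (SAA) over A. -/
/-- An `n`-tape non-deterministic semi-sorted asynchronous automaton (SAA) over `A`:
a non-deterministic finite state automaton over `A ∪ {$}` (possibly with
`ε`-transitions and several start states; the padding symbol `$` is modelled by
`none : Option A`) together with a partition of its state set into `n` sets
(recorded by `tape`, where `tape s = i` means `s ∈ S_i`). -/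
structure SAA (A : Type) (n : ℕ) where
  State : Type
  fintype : Fintype State
  start : Set State
  accept : Set State
  /-- non-deterministic transitions labelled by letters of `A ∪ {$}` -/
  step : State → Option A → Set State
  /-- `ε`-transitions -/
  eps : State → Set State
  /-- the index `i` such that the state lies in `S_i` -/
  tape : State → Fin n

namespace SAA

variable {A : Type} {n : ℕ}

/-- Runs of a non-deterministic semi-sorted asynchronous automaton: `M.Run s r f`
means that starting at `s` with remaining content `r i` on the `i`-th tape, the
automaton can consume all the remaining content and end at `f`, reading from tape
`M.tape s` when in state `s` (this is the existence of an appropriate shuffle). -/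
inductive Run (M : SAA A n) :
    M.State → (Fin n → List (Option A)) → M.State → Prop
  | nil (s : M.State) : Run M s (fun _ => []) s
  | eps {s t f : M.State} {r : Fin n → List (Option A)}
      (h : t ∈ M.eps s) (hrun : Run M t r f) : Run M s r f
  | step {s t f : M.State} {c : Option A} {rest : List (Option A)}
      {r : Fin n → List (Option A)}
      (h : t ∈ M.step s c)
      (hr : r (M.tape s) = c :: rest)
      (hrun : Run M t (Function.update r (M.tape s) rest) f) :
      Run M s r f

/-- The SAA accepts `(w 1, …, w n)` if some shuffle of `(w 1 $, …, w n $)` labels a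
path from a start state to an accept state, each letter from the `i`-th word being
read while the automaton is in a state of `S_i`. -/
def Accepts (M : SAA A n) (w : Fin n → List A) : Prop :=
  ∃ s₀ ∈ M.start, ∃ f ∈ M.accept,
    M.Run s₀ (fun i => (w i).map some ++ [none]) f

end SAA

/-- An `n`-variable language is weakly regular if it is the language accepted by some
`n`-tape non-deterministic semi-sorted asynchronous automaton. -/
def IsWeaklyRegular {A : Type} {n : ℕ} (L : Set (Fin n → List A)) : Prop :=
  ∃ M : SAA A n, ∀ w, w ∈ L ↔ M.Accepts w

/-- An `n`-tape non-deterministic filter asynchronous automaton (FAA) over `A`.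
Letters of the padded alphabet `A^$` are tuples `Fin n → Option A`, with `none`
the padding symbol `$`.  The transition function `Δ : S × A^$ → P(S) × E` is split
into its two components `next` and `filters`. -/
structure FAA (A : Type) (n : ℕ) where
  State : Type
  fintype : Fintype State
  start : Set State
  accept : Set State
  /-- the set of possible next states -/
  next : State → (Fin n → Option A) → Set State
  /-- the set of possible filters -/
  filters : State → (Fin n → Option A) → Set (Finset (Fin n))
  /-- filters are nonempty subsets of `{1, …, n}` -/
  filters_nonempty : ∀ s σ, ∀ χ ∈ filters s σ, χ.Nonempty
  /-- if `σ i = $` and the state set of `Δ(s, σ)` is nonempty,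
  then `i` belongs to no filter of `Δ(s, σ)` -/
  pad : ∀ s σ (i : Fin n), σ i = none → (next s σ).Nonempty →
    ∀ χ ∈ filters s σ, i ∉ χ

namespace FAA

variable {A : Type} {n : ℕ}

/-- Runs of an FAA: `r i` is the unread suffix of the `i`-th tape, so the current
letter on tape `i` is its head (or `$` once past the end of the tape); one chooses
a filter and a next state from the transition function and advances by one position
exactly the tapes whose index lies in the filter.  `M.Run s r f` means that
starting at `s` the automaton can read every tape to its end and terminate at `f`. -/
inductive Run (M : FAA A n) : M.State → (Fin n → List A) → M.State → Prop
  | nil (s : M.State) : Run M s (fun _ => []) s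
  | step {s t f : M.State} {r : Fin n → List A} {χ : Finset (Fin n)}
      (ht : t ∈ M.next s fun i => (r i).head?)
      (hχ : χ ∈ M.filters s fun i => (r i).head?)
      (hrun : Run M t (fun i => if i ∈ χ then (r i).tail else r i) f) :
      Run M s r f

/-- Acceptance for FAAs: some run starts in a start state, reads every tape to its
end, and terminates in an accept state. -/
def Accepts (M : FAA A n) (w : Fin n → List A) : Prop :=
  ∃ s₀ ∈ M.start, ∃ f ∈ M.accept, M.Run s₀ w f

/-- A deterministic-filter asynchronous automaton (DFAA) is an FAA in which, in any
given state and for any input letter, there is at most one possible filter. -/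
def IsDeterministicFilter (M : FAA A n) : Prop :=
  ∀ s σ, (M.filters s σ).Subsingleton

end FAA

/-! An FAA is simulated by an SAA that reads letters ahead into a buffer with one entry per
tape: once every entry is filled (with `$` on an exhausted tape), a transition of the FAA, which
looks at all heads at once, becomes an `ε`-move emptying the entries of the tapes in its filter.
Conversely, an SAA is simulated by an FAA that advances one tape per step, absorbing
`ε`-moves and the reading of `$`s into a closure and remembering which `$`s have been read;
since the tape to be advanced is guessed in advance and stored in the state, this FAA has
deterministic filters. The cycle FAA → SAA → DFAA → FAA gives both equivalences. -/

open Relation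

section Padded

variable {A : Type}

/-- The word `l $`. -/
def padded (l : List A) : List (Option A) :=
  l.map some ++ [none]

theorem padded_eq_cons (l : List A) : padded l = l.head? :: (padded l).tail := by
  cases l <;> rfl

theorem cons_eq_padded_iff {x : Option A} {R : List (Option A)} {l : List A} :
    x :: R = padded l ↔ x = l.head? ∧ R = (padded l).tail := by
  cases l <;> simp [padded]

theorem tail_padded {l : List A} (hl : l ≠ []) : (padded l).tail = padded l.tail := by
  cases l with
  | nil => contradiction
  | cons => rfl

end Padded

namespace FAA

variable {A : Type} {n : ℕ}

def advance (χ : Finset (Fin n)) (r : Fin n → List A) : Fin n → List A :=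
  fun i => if i ∈ χ then (r i).tail else r i

theorem ne_nil_of_mem_filters {M : FAA A n} {s t : M.State} {r : Fin n → List A}
    {χ : Finset (Fin n)} (ht : t ∈ M.next s fun i => (r i).head?)
    (hχ : χ ∈ M.filters s fun i => (r i).head?) : ∀ i ∈ χ, r i ≠ [] :=
  fun i hi hri => M.pad s _ i (by simp [hri]) ⟨t, ht⟩ χ hχ hi

/-- The SAA simulating `M`. In a state `(s, b, k)`, `s` is the state of `M`, `b i` is the
letter under `M`'s head on tape `i` once the SAA has read it ahead, and `k` is the tape the
SAA reads from. -/
def toSAA [Fintype A] (M : FAA A n) : SAA A n where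
  State := M.State × (Fin n → Option (Option A)) × Fin n
  fintype := letI := M.fintype; inferInstance
  start := {q | q.1 ∈ M.start ∧ q.2.1 = fun _ => none}
  accept := {q | q.1 ∈ M.accept ∧ q.2.1 = fun _ => some none}
  step q x :=
    {q' | q.2.1 q.2.2 = none ∧ q' = (q.1, Function.update q.2.1 q.2.2 (some x), q.2.2)}
  eps q := {q' | q'.1 = q.1 ∧ q'.2.1 = q.2.1} ∪
    {q' | ∃ σ, q.2.1 = (fun i => some (σ i)) ∧ q'.1 ∈ M.next q.1 σ ∧
      ∃ χ ∈ M.filters q.1 σ, q'.2.1 = fun i => if i ∈ χ then none else some (σ i)}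
  tape q := q.2.2

/-- `b` is a buffer of `M.toSAA` with unread padded tapes `R` while `M` has `r` left. -/
def Buffered (b : Fin n → Option (Option A)) (R : Fin n → List (Option A))
    (r : Fin n → List A) : Prop :=
  ∀ i, (b i).toList ++ R i = padded (r i)

section Buffered

variable {b : Fin n → Option (Option A)} {R : Fin n → List (Option A)} {r : Fin n → List A}

theorem Buffered.eq_of_eq_some (h : Buffered b R r) {i : Fin n} {x : Option A}
    (hx : b i = some x) : x = (r i).head? ∧ R i = (padded (r i)).tail :=
  cons_eq_padded_iff.1 (by simpa [hx] using h i)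

theorem Buffered.eq_of_eq_none (h : Buffered b R r) {i : Fin n} (hx : b i = none) :
    R i = padded (r i) := by
  simpa [hx] using h i

theorem Buffered.update (h : Buffered b R r) {i : Fin n} (hi : b i = none) {x : Option A}
    {rest : List (Option A)} (hR : R i = x :: rest) :
    Buffered (Function.update b i (some x)) (Function.update R i rest) r := fun j => by
  rcases eq_or_ne j i with rfl | hj
  · simpa [← hR] using h.eq_of_eq_none hi
  · simpa [Function.update_apply, hj] using h j

theorem buffered_advance {χ : Finset (Fin n)} (hχ : ∀ i ∈ χ, r i ≠ []) :
    Buffered (fun i => if i ∈ χ then none else some (r i).head?)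
      (fun i => (padded (r i)).tail) (advance χ r) := fun i => by
  by_cases hi : i ∈ χ
  · simp [advance, hi, tail_padded (hχ i hi)]
  · simpa [advance, hi] using (padded_eq_cons (r i)).symm

end Buffered

variable [Fintype A] {M : FAA A n}

theorem toSAA_run_of_full_buffer {s : M.State} {g : M.toSAA.State} {r : Fin n → List A}
    {b : Fin n → Option (Option A)} {R : Fin n → List (Option A)} {k k' : Fin n}
    (hbR : Buffered b R r)
    (h : M.toSAA.Run (s, fun i => some (r i).head?, k') (fun i => (padded (r i)).tail) g) :
    M.toSAA.Run (s, b, k) R g := by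
  induction hm : (Finset.univ.filter fun i => b i = none).card generalizing b R k with
  | zero =>
    have hfull : ∀ i, b i ≠ none := by simpa [Finset.filter_eq_empty_iff] using hm
    have hb : ∀ i, b i = some (r i).head? ∧ R i = (padded (r i)).tail := fun i => by
      obtain ⟨x, hx⟩ := Option.ne_none_iff_exists'.1 (hfull i)
      obtain ⟨rfl, hR⟩ := hbR.eq_of_eq_some hx
      exact ⟨hx, hR⟩
    obtain ⟨rfl, rfl⟩ : b = _ ∧ R = _ :=
      ⟨funext fun i => (hb i).1, funext fun i => (hb i).2⟩
    exact SAA.Run.eps (t := (s, _, k')) (Or.inl ⟨rfl, rfl⟩) h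
  | succ m ih =>
    obtain ⟨i, hi⟩ : (Finset.univ.filter fun i => b i = none).Nonempty :=
      Finset.card_pos.1 (by omega)
    replace hi : b i = none := (Finset.mem_filter.1 hi).2
    have hRi : R i = (r i).head? :: (padded (r i)).tail :=
      (hbR.eq_of_eq_none hi).trans (padded_eq_cons _)
    refine SAA.Run.eps (t := (s, b, i)) (Or.inl ⟨rfl, rfl⟩)
      (SAA.Run.step (M := M.toSAA) (s := (s, b, i)) ⟨hi, rfl⟩ hRi (ih (hbR.update hi hRi) ?_))
    have : Finset.univ.filter (fun j => Function.update b i (some (r i).head?) j = none) =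
        (Finset.univ.filter fun j => b j = none).erase i := by
      ext j
      rcases eq_or_ne j i with rfl | hj <;> simp [Function.update_apply, *]
    rw [this, Finset.card_erase_of_mem (by simpa using hi), hm, Nat.add_sub_cancel]

theorem exists_toSAA_run_of_run {s f : M.State} {r : Fin n → List A} (h : M.Run s r f)
    (hf : f ∈ M.accept) {b : Fin n → Option (Option A)} {R : Fin n → List (Option A)}
    (hbR : Buffered b R r) (k : Fin n) : ∃ g ∈ M.toSAA.accept, M.toSAA.Run (s, b, k) R g := by
  induction h generalizing b R k with
  | nil s =>
    exact ⟨(s, fun _ => some none, k), ⟨hf, rfl⟩, toSAA_run_of_full_buffer hbR (.nil _)⟩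
  | step ht hχ _ ih =>
    obtain ⟨g, hg, htg⟩ := ih hf (buffered_advance (ne_nil_of_mem_filters ht hχ)) k
    exact ⟨g, hg, toSAA_run_of_full_buffer (k' := k) hbR
      (.eps (Or.inr ⟨_, rfl, ht, _, hχ, rfl⟩) htg)⟩

theorem exists_run_of_toSAA_run {q g : M.toSAA.State} {R : Fin n → List (Option A)}
    (h : M.toSAA.Run q R g) (hg : g ∈ M.toSAA.accept) {r : Fin n → List A}
    (hbR : Buffered q.2.1 R r) : ∃ f ∈ M.accept, M.Run q.1 r f := by
  induction h generalizing r with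
  | nil q =>
    obtain ⟨hq, hb⟩ := hg
    obtain rfl : r = fun _ => [] := funext fun i =>
      List.head?_eq_none_iff.1 (hbR.eq_of_eq_some (congrFun hb i)).1.symm
    exact ⟨q.1, hq, .nil _⟩
  | eps hq' _ ih =>
    rcases hq' with ⟨h1, h2⟩ | ⟨σ, hb, ht, χ, hχ, hb'⟩
    · exact h1 ▸ ih hg (h2 ▸ hbR)
    · have hσR := fun i => hbR.eq_of_eq_some (congrFun hb i)
      obtain rfl : σ = fun i => (r i).head? := funext fun i => (hσR i).1
      obtain rfl : _ = fun i => (padded (r i)).tail := funext fun i => (hσR i).2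
      obtain ⟨f, hf, htf⟩ := ih hg (hb' ▸ buffered_advance (ne_nil_of_mem_filters ht hχ))
      exact ⟨f, hf, .step ht hχ htf⟩
  | step hq' hR _ ih =>
    obtain ⟨hk, rfl⟩ := hq'
    exact ih hg (hbR.update hk hR)

variable (M) in
theorem accepts_toSAA_iff [NeZero n] (w : Fin n → List A) :
    M.toSAA.Accepts w ↔ M.Accepts w := by
  constructor
  · rintro ⟨q, ⟨hq, hb⟩, g, hg, h⟩
    exact ⟨q.1, hq, exists_run_of_toSAA_run h hg (by rw [hb]; exact fun i => rfl)⟩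
  · rintro ⟨s, hs, f, hf, h⟩
    obtain ⟨g, hg, h'⟩ := exists_toSAA_run_of_run h hf (b := fun _ => none)
      (R := fun i => padded (w i)) (fun i => rfl) 0
    exact ⟨_, ⟨hs, rfl⟩, g, hg, h'⟩

end FAA

namespace SAA

variable {A : Type} {n : ℕ}

/-- Moves of `M` reading no letter of `A` while the tape heads show `σ`; the second component
is the set of tapes whose `$` has been read. -/
inductive SilentStep (M : SAA A n) (σ : Fin n → Option A) :
    M.State × Finset (Fin n) → M.State × Finset (Fin n) → Prop
  | eps {s t : M.State} {D : Finset (Fin n)} (h : t ∈ M.eps s) : SilentStep M σ (s, D) (t, D)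
  | dollar {s t : M.State} {D : Finset (Fin n)} (h : t ∈ M.step s none)
      (hσ : σ (M.tape s) = none) (hD : M.tape s ∉ D) :
      SilentStep M σ (s, D) (t, insert (M.tape s) D)

/-- The FAA simulating `M`. In a state `(s, D, i)`, `s` is the state of `M`, `D` is the set of
tapes whose `$` has been read, and `i` is the tape of the next letter of `A` to be read, after
any number of silent steps. Guessing `i` in advance makes the filter a function of the state. -/
def toFAA (M : SAA A n) : FAA A n where
  State := M.State × Finset (Fin n) × Fin n
  fintype := letI := M.fintype; inferInstance
  start := {p | p.1 ∈ M.start ∧ p.2.1 = ∅}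
  accept := {p | ∃ u ∈ M.accept,
    ReflTransGen (M.SilentStep fun _ => none) (p.1, p.2.1) (u, Finset.univ)}
  next p σ := {q | ∃ u, ReflTransGen (M.SilentStep σ) (p.1, p.2.1) (u, q.2.1) ∧
    M.tape u = p.2.2 ∧ ∃ a, σ p.2.2 = some a ∧ q.1 ∈ M.step u (some a)}
  filters p σ := {χ | χ = {p.2.2} ∧ σ p.2.2 ≠ none}
  filters_nonempty := by
    rintro p σ χ ⟨rfl, -⟩
    exact Finset.singleton_nonempty _
  pad := by
    rintro p σ i hi - χ ⟨rfl, hne⟩ hmem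
    rw [Finset.mem_singleton.1 hmem] at hi
    exact hne hi

theorem toFAA_isDeterministicFilter (M : SAA A n) : M.toFAA.IsDeterministicFilter := by
  rintro p σ χ ⟨rfl, -⟩ χ' ⟨rfl, -⟩
  rfl

/-- The unread padded tapes of `M` while `M.toFAA` has `r` left and the `$` of each tape in `D`
has been read. -/
def unread (D : Finset (Fin n)) (r : Fin n → List A) : Fin n → List (Option A) :=
  fun j => if j ∈ D then (r j).map some else padded (r j)

theorem unread_advance {D : Finset (Fin n)} {r : Fin n → List A} {j : Fin n} {a : A}
    (ha : (r j).head? = some a) :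
    unread D r j = some a :: unread D (FAA.advance {j} r) j ∧
      Function.update (unread D r) j (unread D (FAA.advance {j} r) j) =
        unread D (FAA.advance {j} r) := by
  obtain ⟨tl, hr⟩ : ∃ tl, r j = a :: tl := List.head?_eq_some_iff.1 ha
  refine ⟨by by_cases hj : j ∈ D <;> simp [unread, FAA.advance, hj, hr, padded], ?_⟩
  exact Function.update_eq_iff.2 ⟨rfl, fun i hi => by simp [unread, FAA.advance, hi]⟩

theorem unread_dollar {D : Finset (Fin n)} {r : Fin n → List A} {j : Fin n} (hr : r j = [])
    (hj : j ∉ D) :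
    unread D r j = [none] ∧ Function.update (unread D r) j [] = unread (insert j D) r := by
  refine ⟨by simp [unread, hj, hr, padded], ?_⟩
  exact Function.update_eq_iff.2
    ⟨by simp [unread, hr], fun i hi => by simp [unread, Finset.mem_insert, hi]⟩

variable {M : SAA A n}

theorem run_of_silentStep {r : Fin n → List A} {p q : M.State × Finset (Fin n)} {g : M.State}
    (hpq : M.SilentStep (fun j => (r j).head?) p q) (h : M.Run q.1 (unread q.2 r) g) :
    M.Run p.1 (unread p.2 r) g := by
  cases hpq with
  | eps ht => exact .eps ht h
  | dollar ht hσ hD =>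
    have hu := unread_dollar (List.head?_eq_none_iff.1 hσ) hD
    exact .step ht hu.1 (hu.2 ▸ h)

theorem run_of_reflTransGen_silentStep {r : Fin n → List A} {p q : M.State × Finset (Fin n)}
    {g : M.State} (hpq : ReflTransGen (M.SilentStep fun j => (r j).head?) p q)
    (h : M.Run q.1 (unread q.2 r) g) : M.Run p.1 (unread p.2 r) g := by
  induction hpq using ReflTransGen.head_induction_on with
  | refl => exact h
  | head hpq _ ih => exact run_of_silentStep hpq ih

theorem exists_run_of_toFAA_run {p f : M.toFAA.State} {r : Fin n → List A}
    (h : M.toFAA.Run p r f) (hf : f ∈ M.toFAA.accept) :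
    ∃ g ∈ M.accept, M.Run p.1 (unread p.2.1 r) g := by
  induction h with
  | nil p =>
    obtain ⟨u, hu, hpu⟩ := hf
    have : unread (n := n) Finset.univ (fun _ => ([] : List A)) = fun _ => [] := by
      funext j
      simp [unread]
    exact ⟨u, hu, run_of_reflTransGen_silentStep (r := fun _ => []) hpu (this ▸ .nil u)⟩
  | @step p t f r χ ht hχ _ ih =>
    obtain ⟨rfl, -⟩ := hχ
    obtain ⟨u, hpu, hu, a, ha, htu⟩ := ht
    obtain ⟨g, hg, htg⟩ := ih hf
    have hadv := unread_advance (D := t.2.1) ha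
    refine ⟨g, hg, run_of_reflTransGen_silentStep hpu (.step htu (hu ▸ hadv.1) ?_)⟩
    rw [hu, hadv.2]
    exact htg

theorem exists_toFAA_run_of_silentStep {r : Fin n → List A} {s t : M.State}
    {D D' : Finset (Fin n)} {i : Fin n} {f : M.toFAA.State}
    (hst : M.SilentStep (fun j => (r j).head?) (s, D) (t, D'))
    (h : M.toFAA.Run (t, D', i) r f) (hf : f ∈ M.toFAA.accept) :
    ∃ f' ∈ M.toFAA.accept, M.toFAA.Run (s, D, i) r f' := by
  rcases h with _ | ⟨ht, hχ, h⟩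
  · obtain ⟨u, hu, htu⟩ := hf
    exact ⟨(s, D, i), ⟨u, hu, .head hst htu⟩, .nil _⟩
  · obtain ⟨u, htu, hu, ha⟩ := ht
    exact ⟨f, hf, .step ⟨u, .head hst htu, hu, ha⟩ hχ h⟩

theorem exists_toFAA_run_of_run [NeZero n] {s g : M.State} {R : Fin n → List (Option A)}
    (h : M.Run s R g) (hg : g ∈ M.accept) {D : Finset (Fin n)} {r : Fin n → List A}
    (hR : R = unread D r) : ∃ i, ∃ f ∈ M.toFAA.accept, M.toFAA.Run (s, D, i) r f := by
  induction h generalizing D r with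
  | nil s =>
    have hj : ∀ j, j ∈ D ∧ r j = [] := fun j => by
      have := (congrFun hR j).symm
      unfold unread at this
      split_ifs at this with hjD
      · exact ⟨hjD, List.map_eq_nil_iff.1 this⟩
      · simp [padded] at this
    obtain rfl : D = Finset.univ := Finset.eq_univ_of_forall fun j => (hj j).1
    obtain rfl : r = fun _ => [] := funext fun j => (hj j).2
    exact ⟨0, _, ⟨s, hg, .refl⟩, .nil _⟩
  | eps ht _ ih =>
    obtain ⟨i, f, hf, h⟩ := ih hg hR
    exact ⟨i, exists_toFAA_run_of_silentStep (.eps ht) h hf⟩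
  | @step s t g c rest R ht hc _ ih =>
    subst hR
    cases hr : r (M.tape s) with
    | nil =>
      have hD : M.tape s ∉ D := fun hD => by simp [unread, hD, hr] at hc
      obtain ⟨hu, hupd⟩ := unread_dollar hr hD
      obtain ⟨rfl, rfl⟩ := List.cons.inj (hc.symm.trans hu)
      obtain ⟨i, f, hf, h⟩ := ih hg hupd
      exact ⟨i, exists_toFAA_run_of_silentStep (.dollar ht (by simp [hr]) hD) h hf⟩
    | cons a tl =>
      have ha : (r (M.tape s)).head? = some a := by simp [hr]
      obtain ⟨hu, hupd⟩ := unread_advance (D := D) ha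
      obtain ⟨rfl, rfl⟩ := List.cons.inj (hc.symm.trans hu)
      obtain ⟨i, f, hf, h⟩ := ih hg hupd
      exact ⟨M.tape s, f, hf,
        .step (t := (t, D, i)) ⟨s, .refl, rfl, a, ha, ht⟩ ⟨rfl, by simp [ha]⟩ h⟩

variable (M) in
theorem accepts_toFAA_iff [NeZero n] (w : Fin n → List A) :
    M.toFAA.Accepts w ↔ M.Accepts w := by
  have hw : unread ∅ w = fun i => padded (w i) := funext fun i => by simp [unread]
  constructor
  · rintro ⟨⟨s, D, i⟩, ⟨hs, rfl⟩, f, hf, h⟩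
    obtain ⟨g, hg, h'⟩ := exists_run_of_toFAA_run h hf
    exact ⟨s, hs, g, hg, hw ▸ h'⟩
  · rintro ⟨s, hs, g, hg, h⟩
    obtain ⟨i, f, hf, h'⟩ := exists_toFAA_run_of_run h hg hw.symm
    exact ⟨(s, ∅, i), ⟨hs, rfl⟩, f, hf, h'⟩

end SAA

/-- FAAs, DFAAs and SAAs accept the same class of `n`-variable languages:
`L` is accepted by some non-deterministic filter asynchronous automaton iff it is
accepted by some deterministic-filter asynchronous automaton iff it is accepted by
some non-deterministic semi-sorted asynchronous automaton. -/
theorem faa_dfaa_saa_equivalent {A : Type} [Fintype A] {n : ℕ} (hn : 1 ≤ n)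
    (L : Set (Fin n → List A)) :
    ((∃ M : FAA A n, ∀ w, w ∈ L ↔ M.Accepts w) ↔
        ∃ M : FAA A n, M.IsDeterministicFilter ∧ ∀ w, w ∈ L ↔ M.Accepts w) ∧
      ((∃ M : FAA A n, ∀ w, w ∈ L ↔ M.Accepts w) ↔ IsWeaklyRegular L) := by
  have : NeZero n := NeZero.of_pos hn
  have faa_saa : (∃ M : FAA A n, ∀ w, w ∈ L ↔ M.Accepts w) → IsWeaklyRegular L :=
    fun ⟨M, hM⟩ => ⟨M.toSAA, fun w => (hM w).trans (M.accepts_toSAA_iff w).symm⟩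
  have saa_dfaa : IsWeaklyRegular L →
      ∃ M : FAA A n, M.IsDeterministicFilter ∧ ∀ w, w ∈ L ↔ M.Accepts w :=
    fun ⟨M, hM⟩ => ⟨M.toFAA, M.toFAA_isDeterministicFilter,
      fun w => (hM w).trans (M.accepts_toFAA_iff w).symm⟩
  have dfaa_faa : (∃ M : FAA A n, M.IsDeterministicFilter ∧ ∀ w, w ∈ L ↔ M.Accepts w) →
      ∃ M : FAA A n, ∀ w, w ∈ L ↔ M.Accepts w :=
    fun ⟨M, _, hM⟩ => ⟨M, hM⟩
  exact ⟨⟨saa_dfaa ∘ faa_saa, dfaa_faa⟩, ⟨faa_saa, dfaa_faa ∘ saa_dfaa⟩⟩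
end

section
/- If L is a quasi-regular n-variable language over a finite alphabet A, then its complement (A*)^n minus L is also quasi-regular. -/
/-!
Runs of a semi-sorted automaton are deterministic: the current state decides which tape is
read next, and the letter read decides the next state. Hence the complement is accepted by an
automaton that simulates `M` while recording which tapes have already been read up to their `$`.
Once `M` gets stuck, either because it has no transition or because it wants to read a tape that
is already exhausted, the simulation moves to a dead state that reads the remaining tapes in any
order. Every input thus has exactly one complete run, and it is accepting precisely when it does
not end in a simulated accept state of `M`.
-/

theorem sum_length_update_lt {ι α : Type*} [Fintype ι] [DecidableEq ι] {r : ι → List α}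
    {j : ι} {c : α} {rest : List α} (hr : r j = c :: rest) :
    ∑ i, (Function.update r j rest i).length < ∑ i, (r i).length := by
  refine Finset.sum_lt_sum (fun i _ => ?_) ⟨j, Finset.mem_univ j, by simp [hr]⟩
  rcases eq_or_ne i j with rfl | hij
  · simp [hr]
  · simp [hij]

namespace SemiSortedAA

variable {A : Type} {n : ℕ}

theorem Run.unique {M : SemiSortedAA A n} {s f f' : M.State} {r : Fin n → List (Option A)}
    (h : M.Run s r f) (h' : M.Run s r f') : f = f' := by
  induction h generalizing f' with
  | nil => cases h' with
    | nil => rfl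
    | step _ hr _ => simp at hr
  | step hstep hr _ ih => cases h' with
    | nil => simp at hr
    | step hstep' hr' hrun' =>
      obtain ⟨rfl, rfl⟩ := List.cons.inj (hr.symm.trans hr')
      obtain rfl := Option.some.inj (hstep.symm.trans hstep')
      exact ih hrun'

theorem Run.exists_of_invariant {M : SemiSortedAA A n}
    (P : M.State → (Fin n → List (Option A)) → Prop)
    (hP : ∀ s r, P s r → (∃ i, r i ≠ []) → ∃ c rest t, r (M.tape s) = c :: rest ∧
      M.step s c = some t ∧ P t (Function.update r (M.tape s) rest))
    {s : M.State} {r : Fin n → List (Option A)} (h : P s r) : ∃ f, M.Run s r f := by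
  by_cases hne : ∃ i, r i ≠ []
  · obtain ⟨c, rest, t, hr, hstep, ht⟩ := hP s r h hne
    have := sum_length_update_lt hr
    obtain ⟨f, hf⟩ := Run.exists_of_invariant P hP ht
    exact ⟨f, .step hstep hr hf⟩
  · push Not at hne
    obtain rfl : r = fun _ => [] := funext hne
    exact ⟨s, .nil s⟩
termination_by ∑ i, (r i).length

def IsPadded (x : List (Option A)) : Prop :=
  ∃ w : List A, x = w.map some ++ [none]

theorem IsPadded.ne_nil {x : List (Option A)} (h : IsPadded x) : x ≠ [] := by
  obtain ⟨w, rfl⟩ := h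
  simp

theorem IsPadded.eq_nil_of_none_cons {rest : List (Option A)} (h : IsPadded (none :: rest)) :
    rest = [] := by
  obtain ⟨_ | ⟨a, w⟩, hw⟩ := h <;> simp_all

theorem IsPadded.of_some_cons {a : A} {rest : List (Option A)} (h : IsPadded (some a :: rest)) :
    IsPadded rest := by
  obtain ⟨_ | ⟨b, w⟩, hw⟩ := h
  · simp at hw
  · exact ⟨w, by simp_all⟩

def markFinished (j : Fin n) (c : Option A) (F : Finset (Fin n)) : Finset (Fin n) :=
  c.elim (insert j F) fun _ => F

def Consistent (F : Finset (Fin n)) (r : Fin n → List (Option A)) : Prop :=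
  ∀ i, (i ∈ F → r i = []) ∧ (i ∉ F → IsPadded (r i))

namespace Consistent

variable {F : Finset (Fin n)} {r : Fin n → List (Option A)}

theorem exists_notMem (h : Consistent F r) (hne : ∃ i, r i ≠ []) : ∃ i, i ∉ F := by
  obtain ⟨i, hi⟩ := hne
  exact ⟨i, fun hiF => hi ((h i).1 hiF)⟩

theorem exists_eq_cons (h : Consistent F r) {j : Fin n} (hj : j ∉ F) :
    ∃ c rest, r j = c :: rest :=
  List.exists_cons_of_ne_nil ((h j).2 hj).ne_nil

theorem notMem {j : Fin n} {c : Option A} {rest : List (Option A)} (h : Consistent F r)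
    (hr : r j = c :: rest) : j ∉ F := fun hj => by
  simp [(h j).1 hj] at hr

theorem update {j : Fin n} {c : Option A} {rest : List (Option A)} (h : Consistent F r)
    (hr : r j = c :: rest) : Consistent (markFinished j c F) (Function.update r j rest) := by
  have hj := h.notMem hr
  have hpad : IsPadded (c :: rest) := hr ▸ (h j).2 hj
  intro i
  rcases eq_or_ne i j with rfl | hij
  · cases c with
    | none => simp [markFinished, hpad.eq_nil_of_none_cons]
    | some a => simp [markFinished, hj, hpad.of_some_cons]
  · cases c <;> simpa [markFinished, hij] using h i

end Consistent

variable (M : SemiSortedAA A n)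

-- `Fin n` is inhabited since `M` has a state; the choice matters only while a tape is unfinished.
noncomputable def pendingTape (F : Finset (Fin n)) : Fin n :=
  @Classical.epsilon _ ⟨M.tape M.start⟩ (· ∉ F)

theorem pendingTape_notMem {F : Finset (Fin n)} (h : ∃ i, i ∉ F) : M.pendingTape F ∉ F :=
  Classical.epsilon_spec h

def liveState (S : Option M.State × Finset (Fin n)) : Option M.State :=
  S.1.filter fun s => M.tape s ∉ S.2

noncomputable def nextTape (S : Option M.State × Finset (Fin n)) : Fin n :=
  (M.liveState S).elim (M.pendingTape S.2) M.tape

noncomputable def compl : SemiSortedAA A n where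
  State := Option M.State × Finset (Fin n)
  fintype := letI := M.fintype; inferInstance
  start := (some M.start, ∅)
  accept := {S | ∀ f ∈ S.1, f ∉ M.accept}
  step S c := some ((M.liveState S).bind (M.step · c), markFinished (M.nextTape S) c S.2)
  tape := M.nextTape

variable {M}

theorem nextTape_notMem {S : Option M.State × Finset (Fin n)} {r : Fin n → List (Option A)}
    (h : Consistent S.2 r) (hne : ∃ i, r i ≠ []) : M.nextTape S ∉ S.2 := by
  cases hlive : M.liveState S with
  | none => simpa [nextTape, hlive] using M.pendingTape_notMem (h.exists_notMem hne)
  | some s =>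
    rw [nextTape, hlive]
    simpa using (Option.filter_eq_some_iff.1 hlive).2

theorem exists_run_compl {S : M.compl.State} {r : Fin n → List (Option A)}
    (h : Consistent S.2 r) : ∃ g, M.compl.Run S r g := by
  refine Run.exists_of_invariant (M := M.compl) (fun S r => Consistent S.2 r) ?_ h
  intro S r h hne
  obtain ⟨c, rest, hr⟩ := h.exists_eq_cons (nextTape_notMem h hne)
  exact ⟨c, rest, _, hr, rfl, h.update hr⟩

theorem exists_run_compl_of_run {s f : M.State} {r : Fin n → List (Option A)} {F : Finset (Fin n)}
    (h : M.Run s r f) (hF : Consistent F r) : ∃ F', M.compl.Run (some s, F) r (some f, F') := by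
  induction h generalizing F with
  | nil => exact ⟨F, .nil _⟩
  | @step s t f c rest r hstep hr _ ih =>
    have hlive : M.liveState (some s, F) = some s := by simp [liveState, hF.notMem hr]
    have htape : M.compl.tape (some s, F) = M.tape s := by simp [compl, nextTape, hlive]
    have hstep' : M.compl.step (some s, F) c = some (some t, markFinished (M.tape s) c F) := by
      simp [compl, nextTape, hlive, hstep]
    obtain ⟨F', hrun⟩ := ih (hF.update hr)
    exact ⟨F', .step hstep' (by rwa [htape]) (by rwa [htape])⟩

theorem exists_run_of_run_compl {S g : M.compl.State} {r : Fin n → List (Option A)}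
    (h : M.compl.Run S r g) : ∀ f ∈ g.1, ∃ s ∈ S.1, M.Run s r f := by
  induction h with
  | nil S => exact fun f hf => ⟨f, hf, .nil f⟩
  | @step S T g c rest r hstep hr _ ih =>
    intro f hf
    obtain ⟨t, ht, hrun⟩ := ih f hf
    obtain rfl := Option.some.inj hstep.symm
    obtain ⟨s, hs, hst⟩ := Option.mem_bind_iff.1 ht
    have htape : M.compl.tape S = M.tape s := by simp [compl, nextTape, Option.mem_def.1 hs]
    simp only [liveState, Option.mem_filter_iff] at hs
    exact ⟨s, hs.1, .step hst (htape ▸ hr) (htape ▸ hrun)⟩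

end SemiSortedAA

open SemiSortedAA in
theorem isQuasiRegular_compl_general {A : Type} {n : ℕ}
    (L : Set (Fin n → List A)) (hL : IsQuasiRegular L) :
    IsQuasiRegular Lᶜ := by
  obtain ⟨M, hM⟩ := hL
  refine ⟨M.compl, fun w => ?_⟩
  have hinput : Consistent ∅ fun i => (w i).map some ++ [none] :=
    fun i => ⟨fun hi => absurd hi (Finset.notMem_empty i), fun _ => ⟨w i, rfl⟩⟩
  rw [Set.mem_compl_iff, hM]
  constructor
  · intro hw
    obtain ⟨g, hg⟩ := exists_run_compl (M := M) (S := M.compl.start) hinput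
    refine ⟨g, fun f hf hacc => hw ⟨f, hacc, ?_⟩, hg⟩
    obtain ⟨s, hs, hrun⟩ := exists_run_of_run_compl hg f hf
    obtain rfl := Option.mem_some_iff.1 hs
    exact hrun
  · rintro ⟨g, hg, hrun⟩ ⟨f, hf, hMrun⟩
    obtain ⟨F, hF⟩ := exists_run_compl_of_run hMrun hinput
    exact hg f (by rw [Run.unique hrun hF]; rfl) hf

/-- Quasi-regular languages are closed under complementation: if `L` is a
quasi-regular `n`-variable language over a finite alphabet `A`, then so is its
complement `(A*)^n \ L`. -/
theorem isQuasiRegular_compl {A : Type} [Fintype A] {n : ℕ} (hn : 1 ≤ n)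
    (L : Set (Fin n → List A)) (hL : IsQuasiRegular L) :
    IsQuasiRegular Lᶜ :=
  isQuasiRegular_compl_general L hL
end

section
/- Over the one-letter alphabet A = {x}, the 2-variable languages L_1 = {(x^n, x^{2n}) : n >= 0} and L_2 = {(x^{2n}, x^n) : n >= 0} are both quasi-regular, but their union L_1 union L_2 is not quasi-regular. In particular, quasi-regular languages are not closed under union. -/
/-!
A run on `(x^a $, x^b $)` reads letters only until it reads the `$` of one tape, and by
determinism all these letter-only prefixes lie on one monotone lattice path. Let `M` recognize
`L₁ ∪ L₂`. On input `(m, 2m)` the path either reaches `(p, 2m)` with `p ≤ m` before the first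
`$`, or it reaches `(m, q)`, reads the `$` of tape `0` into a state `u` and ends with `x^(2m-q) $`
on tape `1`. In the second case `2m - q` is bounded independently of `m`: there are finitely
many states, and if `u` is entered in this way after a fixed pair `(p₀, q₀)`, completing that
with any tail `x^ℓ $` accepted from `u` makes `M` accept `(p₀, q₀ + ℓ)`, so `ℓ ≤ 2 p₀`. Hence the path passes boundedly close below-left of
`(m, 2m)` and, `L₁ ∪ L₂` being symmetric, also of `(2m, m)`: a monotone path cannot do both for
large `m`. `L₁` is recognized by an automaton reading one letter of tape `0`, then two of tape
`1`, cyclically; `L₂` is its mirror image.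
-/

namespace SemiSortedAA

section General

variable {A : Type} {n : ℕ} {M : SemiSortedAA A n}

theorem Run.append {s t f : M.State} {r r' : Fin n → List (Option A)} (h : M.Run s r t)
    (h' : M.Run t r' f) : M.Run s (fun i => r i ++ r' i) f := by
  induction h with
  | nil => simpa using h'
  | @step s t _ c rest r hstep hr _ ih =>
    refine .step (rest := rest ++ r' (M.tape s)) hstep (by simp [hr]) ?_
    convert ih h' using 2 with i
    by_cases hi : i = M.tape s
    · subst hi; simp
    · simp [Function.update_of_ne hi]

theorem Run.exists_step {s f : M.State} {r : Fin n → List (Option A)} {i : Fin n}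
    (h : M.Run s r f) (hr : r i ≠ []) :
    ∃ c rest t, r (M.tape s) = c :: rest ∧ M.step s c = some t := by
  cases h with
  | nil => exact absurd rfl hr
  | step hstep hr' _ => exact ⟨_, _, _, hr', hstep⟩

@[simps!]
def relabel (M : SemiSortedAA A n) (σ : Equiv.Perm (Fin n)) : SemiSortedAA A n :=
  { M with tape := σ ∘ M.tape }

theorem Run.relabel {s f : M.State} {r : Fin n → List (Option A)} (h : M.Run s r f)
    (σ : Equiv.Perm (Fin n)) : (M.relabel σ).Run s (r ∘ σ.symm) f := by
  induction h with
  | nil => exact .nil _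
  | @step s t _ c rest r hstep hr _ ih =>
    refine .step (M := M.relabel σ) hstep (by simpa using hr) ?_
    simpa [Function.update_comp_equiv] using ih

theorem Run.of_relabel {σ : Equiv.Perm (Fin n)} {s f : (M.relabel σ).State}
    {r : Fin n → List (Option A)} (h : (M.relabel σ).Run s r f) : M.Run s (r ∘ σ) f := by
  induction h with
  | nil s => exact .nil (M := M) s
  | @step s t _ c rest r hstep hr _ ih =>
    refine .step (M := M) hstep hr ?_
    have htape : σ.symm ((M.relabel σ).tape s) = M.tape s := σ.symm_apply_apply _
    simpa [Function.update_comp_equiv, htape] using ih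

theorem accepts_relabel_iff {σ : Equiv.Perm (Fin n)} {w : Fin n → List A} :
    (M.relabel σ).Accepts w ↔ M.Accepts (w ∘ σ) :=
  ⟨fun ⟨f, hf, h⟩ => ⟨f, hf, h.of_relabel⟩,
    fun ⟨f, hf, h⟩ => ⟨f, hf, by simpa [Function.comp_def] using h.relabel σ⟩⟩

end General

end SemiSortedAA

theorem IsQuasiRegular.comp_perm {A : Type} {n : ℕ} {L : Set (Fin n → List A)}
    (hL : IsQuasiRegular L) (σ : Equiv.Perm (Fin n)) : IsQuasiRegular {w | w ∘ σ ∈ L} :=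
  let ⟨M, hM⟩ := hL
  ⟨M.relabel σ, fun _ => (hM _).trans SemiSortedAA.accepts_relabel_iff.symm⟩

theorem update_pair_zero {α : Type*} (a b c : α) : Function.update ![a, b] 0 c = ![c, b] := by
  ext i; fin_cases i <;> rfl

theorem update_pair_one {α : Type*} (a b c : α) : Function.update ![a, b] 1 c = ![a, c] := by
  ext i; fin_cases i <;> rfl

theorem pair_nil_nil {α : Type*} : (![[], []] : Fin 2 → List α) = fun _ => [] := by
  ext i; fin_cases i <;> rfl

namespace SemiSortedAA

variable {M : SemiSortedAA Unit 2}

abbrev xWord (k : ℕ) : List (Option Unit) := List.replicate k (some ())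

inductive LetterRun (M : SemiSortedAA Unit 2) : M.State → ℕ → ℕ → M.State → Prop
  | refl (s : M.State) : LetterRun M s 0 0 s
  | step₀ {s t u : M.State} {p q : ℕ} (htape : M.tape s = 0) (hstep : M.step s (some ()) = some t)
      (h : LetterRun M t p q u) : LetterRun M s (p + 1) q u
  | step₁ {s t u : M.State} {p q : ℕ} (htape : M.tape s = 1) (hstep : M.step s (some ()) = some t)
      (h : LetterRun M t p q u) : LetterRun M s p (q + 1) u

namespace LetterRun

theorem trans {s t u : M.State} {p q p' q' : ℕ} (h : LetterRun M s p q t)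
    (h' : LetterRun M t p' q' u) : LetterRun M s (p + p') (q + q') u := by
  induction h with
  | refl => simpa using h'
  | step₀ htape hstep _ ih => simpa [Nat.add_right_comm] using step₀ htape hstep (ih h')
  | step₁ htape hstep _ ih => simpa [Nat.add_right_comm] using step₁ htape hstep (ih h')

theorem run {s t : M.State} {p q : ℕ} (h : LetterRun M s p q t) :
    M.Run s ![xWord p, xWord q] t := by
  induction h with
  | refl s => simpa [pair_nil_nil] using Run.nil (M := M) s
  | @step₀ s _ _ p q htape hstep _ ih =>
    exact .step (rest := xWord p) hstep (by simp [htape, List.replicate_succ])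
      (by rwa [htape, update_pair_zero])
  | @step₁ s _ _ p q htape hstep _ ih =>
    exact .step (rest := xWord q) hstep (by simp [htape, List.replicate_succ])
      (by rwa [htape, update_pair_one])

/-- By determinism, the letter-only runs from a state are the prefixes of a single path. -/
theorem le_and_le_of_add_le {s t t' : M.State} {p q p' q' : ℕ} (h : LetterRun M s p q t)
    (h' : LetterRun M s p' q' t') (hle : p + q ≤ p' + q') : p ≤ p' ∧ q ≤ q' := by
  induction h generalizing p' q' with
  | refl => omega
  | step₀ htape hstep _ ih =>
    cases h' with
    | refl => omega
    | step₀ _ hstep' h' =>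
      cases hstep.symm.trans hstep'
      have := ih h' (by omega)
      omega
    | step₁ htape' => simp [htape] at htape'
  | step₁ htape hstep _ ih =>
    cases h' with
    | refl => omega
    | step₀ htape' => simp [htape] at htape'
    | step₁ _ hstep' h' =>
      cases hstep.symm.trans hstep'
      have := ih h' (by omega)
      omega

theorem le_and_le_or_le_and_le {s t t' : M.State} {p q p' q' : ℕ} (h : LetterRun M s p q t)
    (h' : LetterRun M s p' q' t') : p ≤ p' ∧ q ≤ q' ∨ p' ≤ p ∧ q' ≤ q := by
  rcases le_total (p + q) (p' + q') with hle | hle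
  · exact .inl (h.le_and_le_of_add_le h' hle)
  · exact .inr (h'.le_and_le_of_add_le h hle)

theorem of_relabel_swap {s t : (M.relabel (Equiv.swap 0 1)).State} {p q : ℕ}
    (h : LetterRun (M.relabel (Equiv.swap 0 1)) s p q t) : LetterRun M s q p t := by
  induction h with
  | refl s => exact refl (M := M) s
  | step₀ htape hstep _ ih =>
    exact step₁ (by simpa using Equiv.swap_apply_eq_iff.1 htape) hstep ih
  | step₁ htape hstep _ ih =>
    exact step₀ (by simpa using Equiv.swap_apply_eq_iff.1 htape) hstep ih

end LetterRun

def FinishesTape (M : SemiSortedAA Unit 2) (i : Fin 2) (s : M.State) (p q : ℕ) (u : M.State) :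
    Prop :=
  ∃ t, LetterRun M s p q t ∧ M.tape t = i ∧ M.step t none = some u

theorem FinishesTape.step₀ {i : Fin 2} {s t u : M.State} {p q : ℕ} (htape : M.tape s = 0)
    (hstep : M.step s (some ()) = some t) (h : FinishesTape M i t p q u) :
    FinishesTape M i s (p + 1) q u :=
  let ⟨v, hrun, hv⟩ := h; ⟨v, .step₀ htape hstep hrun, hv⟩

theorem FinishesTape.step₁ {i : Fin 2} {s t u : M.State} {p q : ℕ} (htape : M.tape s = 1)
    (hstep : M.step s (some ()) = some t) (h : FinishesTape M i t p q u) :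
    FinishesTape M i s p (q + 1) u :=
  let ⟨v, hrun, hv⟩ := h; ⟨v, .step₁ htape hstep hrun, hv⟩

theorem Run.exists_finishesTape {s f : M.State} {a b : ℕ}
    (h : M.Run s ![xWord a ++ [none], xWord b ++ [none]] f) :
    (∃ q ℓ u, q + ℓ = b ∧ FinishesTape M 0 s a q u ∧ M.Run u ![[], xWord ℓ ++ [none]] f) ∨
    (∃ p ℓ u, p + ℓ = a ∧ FinishesTape M 1 s p b u ∧ M.Run u ![xWord ℓ ++ [none], []] f) := by
  generalize hr : ![xWord a ++ [none], xWord b ++ [none]] = r at h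
  induction h generalizing a b with
  | nil => simpa using congrFun hr 0
  | @step s t f c rest r hstep hcons hrun ih =>
    subst hr
    obtain htape | htape : M.tape s = 0 ∨ M.tape s = 1 := by omega
    · rw [htape] at hcons hrun
      cases a with
      | zero =>
        obtain ⟨rfl, rfl⟩ : none = c ∧ rest = [] := by simpa using hcons
        exact .inl ⟨0, b, t, by simp, ⟨s, .refl s, htape, hstep⟩, by rwa [update_pair_zero] at hrun⟩
      | succ a =>
        obtain ⟨rfl, rfl⟩ : some () = c ∧ xWord a ++ [none] = rest := by
          simpa [List.replicate_succ] using hcons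
        rcases ih (a := a) (b := b) (by rw [htape, update_pair_zero]) with
          ⟨q, ℓ, u, hb, hfin, htail⟩ | ⟨p, ℓ, u, ha, hfin, htail⟩
        · exact .inl ⟨q, ℓ, u, hb, hfin.step₀ htape hstep, htail⟩
        · exact .inr ⟨p + 1, ℓ, u, by omega, hfin.step₀ htape hstep, htail⟩
    · rw [htape] at hcons hrun
      cases b with
      | zero =>
        obtain ⟨rfl, rfl⟩ : none = c ∧ rest = [] := by simpa using hcons
        exact .inr ⟨0, a, t, by simp, ⟨s, .refl s, htape, hstep⟩, by rwa [update_pair_one] at hrun⟩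
      | succ b =>
        obtain ⟨rfl, rfl⟩ : some () = c ∧ xWord b ++ [none] = rest := by
          simpa [List.replicate_succ] using hcons
        rcases ih (a := a) (b := b) (by rw [htape, update_pair_one]) with
          ⟨q, ℓ, u, hb, hfin, htail⟩ | ⟨p, ℓ, u, ha, hfin, htail⟩
        · exact .inl ⟨q + 1, ℓ, u, by omega, hfin.step₁ htape hstep, htail⟩
        · exact .inr ⟨p, ℓ, u, ha, hfin.step₁ htape hstep, htail⟩

theorem FinishesTape.run_zero {s u f : M.State} {p q ℓ : ℕ} (h : FinishesTape M 0 s p q u)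
    (htail : M.Run u ![[], xWord ℓ ++ [none]] f) :
    M.Run s ![xWord p ++ [none], xWord (q + ℓ) ++ [none]] f := by
  obtain ⟨t, hrun, htape, hstep⟩ := h
  have hend : M.Run t ![[none], xWord ℓ ++ [none]] f :=
    .step (rest := []) hstep (by simp [htape]) (by rwa [htape, update_pair_zero])
  convert hrun.run.append hend using 1
  funext i; fin_cases i <;> simp [← List.append_assoc]

theorem FinishesTape.run_one {s u f : M.State} {p q ℓ : ℕ} (h : FinishesTape M 1 s p q u)
    (htail : M.Run u ![xWord ℓ ++ [none], []] f) :
    M.Run s ![xWord (p + ℓ) ++ [none], xWord q ++ [none]] f := by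
  obtain ⟨t, hrun, htape, hstep⟩ := h
  have hend : M.Run t ![xWord ℓ ++ [none], [none]] f :=
    .step (rest := []) hstep (by simp [htape]) (by rwa [htape, update_pair_one])
  convert hrun.run.append hend using 1
  funext i; fin_cases i <;> simp [← List.append_assoc]

def unaryPair (a b : ℕ) : Fin 2 → List Unit := ![List.replicate a (), List.replicate b ()]

theorem accepts_unaryPair_iff {a b : ℕ} : M.Accepts (unaryPair a b) ↔
    (∃ q ℓ u, q + ℓ = b ∧ FinishesTape M 0 M.start a q u ∧
      ∃ f ∈ M.accept, M.Run u ![[], xWord ℓ ++ [none]] f) ∨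
    (∃ p ℓ u, p + ℓ = a ∧ FinishesTape M 1 M.start p b u ∧
      ∃ f ∈ M.accept, M.Run u ![xWord ℓ ++ [none], []] f) := by
  have hinput : (fun i => (unaryPair a b i).map some ++ [none]) =
      ![xWord a ++ [none], xWord b ++ [none]] := by
    ext i; fin_cases i <;> simp [unaryPair]
  rw [Accepts, hinput]
  constructor
  · rintro ⟨f, hf, h⟩
    rcases h.exists_finishesTape with ⟨q, ℓ, u, hb, hfin, htail⟩ | ⟨p, ℓ, u, ha, hfin, htail⟩
    · exact .inl ⟨q, ℓ, u, hb, hfin, f, hf, htail⟩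
    · exact .inr ⟨p, ℓ, u, ha, hfin, f, hf, htail⟩
  · rintro (⟨q, ℓ, u, rfl, hfin, f, hf, htail⟩ | ⟨p, ℓ, u, rfl, hfin, f, hf, htail⟩)
    · exact ⟨f, hf, hfin.run_zero htail⟩
    · exact ⟨f, hf, hfin.run_one htail⟩

def unaryLang (P : ℕ → ℕ → Prop) : Set (Fin 2 → List Unit) := {w | P (w 0).length (w 1).length}

theorem forall_mem_unaryLang_iff {P : ℕ → ℕ → Prop} :
    (∀ w, w ∈ unaryLang P ↔ M.Accepts w) ↔ ∀ a b, P a b ↔ M.Accepts (unaryPair a b) := by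
  have hw : ∀ w : Fin 2 → List Unit, w = unaryPair (w 0).length (w 1).length := fun w => by
    funext i; fin_cases i <;> simp [unaryPair, List.eq_replicate_iff]
  refine ⟨fun h a b => by simpa [unaryLang, unaryPair] using h (unaryPair a b), fun h w => ?_⟩
  rw [hw w]
  simpa [unaryLang, unaryPair] using h _ _

theorem setOf_comp_swap_mem_unaryLang (P : ℕ → ℕ → Prop) :
    {w | w ∘ Equiv.swap 0 1 ∈ unaryLang P} = unaryLang fun a b => P b a := by
  ext w; simp [unaryLang]

inductive DoublerState
  | read | owesTwo | owesOne | readEnd | accept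
  deriving DecidableEq

instance : Fintype DoublerState where
  elems := {.read, .owesTwo, .owesOne, .readEnd, .accept}
  complete x := by cases x <;> simp

def DoublerState.debt : DoublerState → ℕ
  | .owesTwo => 2
  | .owesOne => 1
  | _ => 0

abbrev doubler : SemiSortedAA Unit 2 where
  State := DoublerState
  fintype := inferInstance
  start := .read
  accept := {.accept}
  step
    | .read, some _ => some .owesTwo
    | .owesTwo, some _ => some .owesOne
    | .owesOne, some _ => some .read
    | .read, none => some .readEnd
    | .readEnd, none => some .accept
    | _, _ => none
  tape
    | .read => 0
    | _ => 1

theorem doubler_letterRun_debt {s t : doubler.State} {p q : ℕ} (h : LetterRun doubler s p q t) :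
    q + DoublerState.debt t = 2 * p + DoublerState.debt s := by
  induction h with
  | refl => rfl
  | @step₀ s _ _ _ _ htape hstep _ ih =>
    cases s <;> simp at htape
    cases hstep
    simp only [DoublerState.debt] at ih ⊢
    omega
  | @step₁ s _ _ _ _ htape hstep _ ih =>
    cases s <;> simp at htape <;> cases hstep <;> (simp only [DoublerState.debt] at ih ⊢; omega)

theorem doubler_letterRun_cycle (m : ℕ) : LetterRun doubler .read m (2 * m) .read := by
  induction m with
  | zero => exact .refl _
  | succ m ih =>
    have hround : LetterRun doubler .read 1 2 .read :=
      .step₀ rfl rfl (.step₁ rfl rfl (.step₁ rfl rfl (.refl _)))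
    simpa [Nat.add_comm, Nat.mul_succ] using hround.trans ih

theorem doubler_accepts_unaryPair_iff {a b : ℕ} : doubler.Accepts (unaryPair a b) ↔ b = 2 * a := by
  rw [accepts_unaryPair_iff]
  constructor
  · rintro (⟨q, ℓ, u, rfl, ⟨t, hrun, htape, hstep⟩, f, -, htail⟩ |
      ⟨p, ℓ, u, rfl, ⟨t, -, htape, hstep⟩, f, -, htail⟩)
    · cases t <;> simp at htape hstep
      subst hstep
      obtain ⟨c, rest, v, hcons, hstep'⟩ := htail.exists_step (i := 1) (by simp)
      cases ℓ <;> cases c <;> simp [List.replicate_succ] at hcons hstep'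
      simpa [DoublerState.debt] using doubler_letterRun_debt hrun
    · cases t <;> simp at htape hstep
      subst hstep
      obtain ⟨c, rest, v, -, hstep'⟩ := htail.exists_step (i := 0) (by simp)
      cases c <;> simp at hstep'
  · rintro rfl
    refine .inl ⟨2 * a, 0, .readEnd, rfl, ⟨.read, doubler_letterRun_cycle a, rfl, rfl⟩,
      .accept, rfl, ?_⟩
    exact .step (rest := []) rfl rfl (by simpa [update_pair_one, pair_nil_nil] using .nil _)

theorem isQuasiRegular_unaryLang_double : IsQuasiRegular (unaryLang fun a b => b = 2 * a) :=
  ⟨doubler, forall_mem_unaryLang_iff.2 fun _ _ => doubler_accepts_unaryPair_iff.symm⟩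

theorem exists_forall_tail_le (hle : ∀ a b, M.Accepts (unaryPair a b) → b ≤ 2 * a) :
    ∃ c, ∀ p q ℓ u, FinishesTape M 0 M.start p q u →
      (∃ f ∈ M.accept, M.Run u ![[], xWord ℓ ++ [none]] f) → ℓ ≤ c := by
  have hbound : ∀ u, ∃ c, ∀ p q ℓ, FinishesTape M 0 M.start p q u →
      (∃ f ∈ M.accept, M.Run u ![[], xWord ℓ ++ [none]] f) → ℓ ≤ c := by
    intro u
    by_cases hu : ∃ p q, FinishesTape M 0 M.start p q u
    · obtain ⟨p₀, q₀, h₀⟩ := hu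
      refine ⟨2 * p₀, fun p q ℓ _ hacc => ?_⟩
      have := hle p₀ (q₀ + ℓ) (accepts_unaryPair_iff.2 (.inl ⟨q₀, ℓ, u, rfl, h₀, hacc⟩))
      omega
    · exact ⟨0, fun p q ℓ hfin => absurd ⟨p, q, hfin⟩ hu⟩
  choose c hc using hbound
  have := M.fintype
  obtain ⟨C, hC⟩ := (Set.finite_range c).bddAbove
  exact ⟨C, fun p q ℓ u hfin hacc => (hc u p q ℓ hfin hacc).trans (hC ⟨u, rfl⟩)⟩

theorem exists_letterRun_near_double (hacc : ∀ m, M.Accepts (unaryPair m (2 * m)))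
    (hle : ∀ a b, M.Accepts (unaryPair a b) → b ≤ 2 * a) :
    ∃ c, ∀ m, ∃ p q t, LetterRun M M.start p q t ∧ p ≤ m ∧ 2 * m ≤ q + c := by
  obtain ⟨c, hc⟩ := exists_forall_tail_le hle
  refine ⟨c, fun m => ?_⟩
  rcases accepts_unaryPair_iff.1 (hacc m) with
    ⟨q, ℓ, u, hqℓ, ⟨t, hrun, hend⟩, htail⟩ | ⟨p, ℓ, u, hpℓ, ⟨t, hrun, -⟩, -⟩
  · have := hc m q ℓ u ⟨t, hrun, hend⟩ htail
    exact ⟨m, q, t, hrun, le_rfl, by omega⟩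
  · exact ⟨p, 2 * m, t, hrun, by omega, by omega⟩

theorem unaryPair_comp_swap (a b : ℕ) : unaryPair a b ∘ Equiv.swap 0 1 = unaryPair b a := by
  funext i; fin_cases i <;> rfl

theorem not_isQuasiRegular_unaryLang_double_or_half :
    ¬ IsQuasiRegular (unaryLang fun a b => b = 2 * a ∨ a = 2 * b) := by
  rintro ⟨M, hM⟩
  rw [forall_mem_unaryLang_iff] at hM
  have hM' : ∀ a b,
      (b = 2 * a ∨ a = 2 * b) ↔ (M.relabel (Equiv.swap 0 1)).Accepts (unaryPair a b) :=
    fun a b => by rw [accepts_relabel_iff, unaryPair_comp_swap, ← hM, or_comm]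
  obtain ⟨c₁, h₁⟩ := exists_letterRun_near_double (fun _ => (hM _ _).1 (.inl rfl))
    fun a b h => by have := (hM a b).2 h; omega
  obtain ⟨c₂, h₂⟩ := exists_letterRun_near_double (fun _ => (hM' _ _).1 (.inl rfl))
    fun a b h => by have := (hM' a b).2 h; omega
  obtain ⟨p₁, q₁, t₁, hrun₁, hp₁, hq₁⟩ := h₁ (c₁ + c₂ + 1)
  obtain ⟨q₂, p₂, t₂, hrun₂, hq₂, hp₂⟩ := h₂ (c₁ + c₂ + 1)
  rcases hrun₁.le_and_le_or_le_and_le hrun₂.of_relabel_swap with h | h <;> omega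

end SemiSortedAA

/-- Over the one-letter alphabet `{x}` (modelled by `Unit`), the languages
`L₁ = {(x^n, x^{2n})}` and `L₂ = {(x^{2n}, x^n)}` are quasi-regular but their union
is not: quasi-regular languages are not closed under union. -/
theorem quasiRegular_not_closed_under_union :
    IsQuasiRegular { w : Fin 2 → List Unit |
        ∃ m : ℕ, w 0 = List.replicate m () ∧ w 1 = List.replicate (2 * m) () } ∧
    IsQuasiRegular { w : Fin 2 → List Unit |
        ∃ m : ℕ, w 0 = List.replicate (2 * m) () ∧ w 1 = List.replicate m () } ∧
    ¬ IsQuasiRegular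
      ({ w : Fin 2 → List Unit |
          ∃ m : ℕ, w 0 = List.replicate m () ∧ w 1 = List.replicate (2 * m) () } ∪
        { w : Fin 2 → List Unit |
          ∃ m : ℕ, w 0 = List.replicate (2 * m) () ∧ w 1 = List.replicate m () }) := by
  have hL₁ : { w : Fin 2 → List Unit |
      ∃ m : ℕ, w 0 = List.replicate m () ∧ w 1 = List.replicate (2 * m) () } =
      SemiSortedAA.unaryLang fun a b => b = 2 * a := by
    ext w; simp [SemiSortedAA.unaryLang, List.eq_replicate_iff]
  have hL₂ : { w : Fin 2 → List Unit |
      ∃ m : ℕ, w 0 = List.replicate (2 * m) () ∧ w 1 = List.replicate m () } =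
      SemiSortedAA.unaryLang fun a b => a = 2 * b := by
    ext w; simp [SemiSortedAA.unaryLang, List.eq_replicate_iff]
  rw [hL₁, hL₂]
  refine ⟨SemiSortedAA.isQuasiRegular_unaryLang_double, ?_,
    SemiSortedAA.not_isQuasiRegular_unaryLang_double_or_half⟩
  simpa [SemiSortedAA.setOf_comp_swap_mem_unaryLang] using
    SemiSortedAA.isQuasiRegular_unaryLang_double.comp_perm (Equiv.swap 0 1)
end

section
/- There exist a finite alphabet A and 2-variable quasi-regular languages P and Q over A such that the intersection P intersect Q is not quasi-regular. In particular, quasi-regular languages are not closed under intersection. -/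
namespace SemiSortedAA

variable {A : Type} {n : ℕ}

def AcceptsFrom (M : SemiSortedAA A n) (s : M.State) (w : Fin n → List A) : Prop :=
  ∃ f ∈ M.accept, M.Run s (fun i => (w i).map some ++ [none]) f

variable {M : SemiSortedAA A n} {s f : M.State} {r : Fin n → List (Option A)} {i : Fin n}

@[simp]
theorem run_nil_iff : M.Run s (fun _ => []) f ↔ f = s := by
  constructor
  · rintro (_ | ⟨_, hr, _⟩)
    · rfl
    · simp at hr
  · rintro rfl
    exact .nil _

theorem run_iff_of_eq_cons {c : Option A} {rest : List (Option A)} (hs : M.tape s = i)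
    (hr : r i = c :: rest) :
    M.Run s r f ↔ ∃ t, M.step s c = some t ∧ M.Run t (Function.update r i rest) f := by
  subst hs
  constructor
  · rintro (_ | ⟨hstep, hr', hrun⟩)
    · simp at hr
    · obtain ⟨rfl, rfl⟩ := List.cons.inj (hr.symm.trans hr')
      exact ⟨_, hstep, hrun⟩
  · rintro ⟨t, hstep, hrun⟩
    exact .step hstep hr hrun

theorem acceptsFrom_iff_of_eq_cons {w : Fin n → List A} {a : A} {u : List A}
    (hs : M.tape s = i) (hw : w i = a :: u) :
    M.AcceptsFrom s w ↔ ∃ t ∈ M.step s (some a), M.AcceptsFrom t (Function.update w i u) := by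
  have hr : (w i).map some ++ [none] = some a :: (u.map some ++ [none]) := by simp [hw]
  have hupd : Function.update (fun j => (w j).map some ++ [none]) i (u.map some ++ [none]) =
      fun j => (Function.update w i u j).map some ++ [none] :=
    funext fun j => (Function.apply_update (fun _ v => v.map some ++ [none]) w i u j).symm
  simp only [AcceptsFrom, run_iff_of_eq_cons (r := fun j => (w j).map some ++ [none]) hs hr, hupd,
    Option.mem_def]
  exact ⟨fun ⟨f, hf, t, ht, hrun⟩ => ⟨t, ht, f, hf, hrun⟩,
    fun ⟨t, ht, f, hf, hrun⟩ => ⟨f, hf, t, ht, hrun⟩⟩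

end SemiSortedAA

theorem update_fin_two_eq_nil {α : Type*} {r : Fin 2 → List α} {i j : Fin 2} (hij : i ≠ j)
    (hj : r j = []) : Function.update r i [] = fun _ => [] := by
  funext t
  rcases (by omega : t = i ∨ t = j) with rfl | rfl
  · simp
  · simp [Function.update_of_ne hij.symm, hj]

-- `budget b`: up to `b` more letters of tape `i` may be read before the next letter of tape `j`.
inductive RatioState (k : ℕ)
  | budget (b : Fin (k + 1))
  | finish
  | drain
  | accept
  deriving Fintype

abbrev ratioAA (A : Type) (i j : Fin 2) (k : ℕ) : SemiSortedAA A 2 where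
  State := RatioState k
  fintype := inferInstance
  start := .budget ⟨0, k.succ_pos⟩
  accept := {.accept}
  step
    | .budget ⟨0, _⟩, some _ => some (.budget (Fin.last k))
    | .budget ⟨0, _⟩, none => some .finish
    | .budget ⟨b + 1, _⟩, some _ => some (.budget ⟨b, by omega⟩)
    | .budget ⟨_ + 1, _⟩, none => some .drain
    | .finish, none => some .accept
    | .drain, some _ => some .drain
    | .drain, none => some .accept
    | _, _ => none
  tape
    | .budget ⟨0, _⟩ => j
    | .budget ⟨_ + 1, _⟩ => i
    | .finish => i
    | .drain => j
    | .accept => i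

namespace ratioAA

open SemiSortedAA

variable {A : Type} {i j : Fin 2} {k : ℕ} {r : Fin 2 → List (Option A)} {f : RatioState k}

theorem run_finish_iff (hij : i ≠ j) {u : List A} (hu : r i = u.map some ++ [none])
    (hj : r j = []) : (ratioAA A i j k).Run .finish r f ↔ u = [] ∧ f = .accept := by
  cases u with
  | nil =>
    rw [run_iff_of_eq_cons (M := ratioAA A i j k) (s := .finish) rfl hu,
      update_fin_two_eq_nil hij hj]
    simp [eq_comm]
  | cons a u => simp [run_iff_of_eq_cons (M := ratioAA A i j k) (s := .finish) rfl hu]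

theorem run_drain_iff (hij : i ≠ j) {v : List A} (hi : r i = [])
    (hv : r j = v.map some ++ [none]) : (ratioAA A i j k).Run .drain r f ↔ f = .accept := by
  induction v generalizing r with
  | nil =>
    rw [run_iff_of_eq_cons (M := ratioAA A i j k) (s := .drain) rfl hv,
      update_fin_two_eq_nil hij.symm hi]
    simp [eq_comm]
  | cons a v ih =>
    rw [run_iff_of_eq_cons (M := ratioAA A i j k) (s := .drain) rfl hv]
    simpa using ih (by simp [Function.update_of_ne hij, hi]) (by simp)

theorem run_budget_iff_of_run_budget_zero_iff (hij : i ≠ j) {v : List A}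
    (h₀ : ∀ {r : Fin 2 → List (Option A)} {u : List A}, r i = u.map some ++ [none] →
      r j = v.map some ++ [none] →
      ((ratioAA A i j k).Run (.budget ⟨0, k.succ_pos⟩) r f ↔
        f = .accept ∧ u.length ≤ k * v.length))
    {u : List A} (hu : r i = u.map some ++ [none]) (hv : r j = v.map some ++ [none])
    (b : Fin (k + 1)) :
    (ratioAA A i j k).Run (.budget b) r f ↔ f = .accept ∧ u.length ≤ b + k * v.length := by
  induction u generalizing r b with
  | nil =>
    obtain ⟨_ | b, hb⟩ := b
    · simpa using h₀ hu hv
    · rw [run_iff_of_eq_cons (M := ratioAA A i j k) (s := .budget ⟨b + 1, hb⟩) rfl hu]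
      simpa using run_drain_iff (v := v) hij (by simp) (by simp [Function.update_of_ne hij.symm, hv])
  | cons a u ih =>
    obtain ⟨_ | b, hb⟩ := b
    · simpa using h₀ hu hv
    · rw [run_iff_of_eq_cons (M := ratioAA A i j k) (s := .budget ⟨b + 1, hb⟩) rfl hu]
      simp only [ratioAA, Option.some.injEq, exists_eq_left', List.length_cons]
      rw [ih (by simp) (by simp [Function.update_of_ne hij.symm, hv])]
      dsimp only
      exact and_congr_right fun _ => by omega

theorem run_budget_iff (hij : i ≠ j) {u v : List A} (hu : r i = u.map some ++ [none])
    (hv : r j = v.map some ++ [none]) (b : Fin (k + 1)) :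
    (ratioAA A i j k).Run (.budget b) r f ↔ f = .accept ∧ u.length ≤ b + k * v.length := by
  induction v generalizing u r b with
  | nil =>
    refine run_budget_iff_of_run_budget_zero_iff hij (fun {r u} hu hv => ?_) hu hv b
    rw [run_iff_of_eq_cons (M := ratioAA A i j k) (s := .budget ⟨0, k.succ_pos⟩) rfl hv]
    simp only [ratioAA, Option.some.injEq, exists_eq_left']
    rw [run_finish_iff (u := u) hij (by simp [Function.update_of_ne hij, hu]) (by simp)]
    simp [and_comm]
  | cons a v ih =>
    refine run_budget_iff_of_run_budget_zero_iff hij (fun {r u} hu hv => ?_) hu hv b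
    rw [run_iff_of_eq_cons (M := ratioAA A i j k) (s := .budget ⟨0, k.succ_pos⟩) rfl hv]
    simp only [ratioAA, Option.some.injEq, exists_eq_left', List.length_cons]
    rw [ih (u := u) (by simp [Function.update_of_ne hij, hu]) (by simp)]
    simp [Nat.mul_succ, add_comm]

end ratioAA

theorem isQuasiRegular_length_le_mul_length {A : Type} {i j : Fin 2} (hij : i ≠ j) (k : ℕ) :
    IsQuasiRegular {w : Fin 2 → List A | (w i).length ≤ k * (w j).length} :=
  ⟨ratioAA A i j k, fun w => by
    simp [SemiSortedAA.Accepts,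
      ratioAA.run_budget_iff (r := fun t => (w t).map some ++ [none]) hij rfl rfl]⟩

def unaryTuple {n : ℕ} (x : Fin n → ℕ) : Fin n → List Unit := fun i => List.replicate (x i) ()

namespace SemiSortedAA

variable {n : ℕ} (M : SemiSortedAA Unit n)

/- While no tape has reached its `$`, a unary automaton follows a single path; this records it
together with the number of letters read from each tape. Once the path dies no input through it
is accepted, so any increment works there; `+ 1` keeps the counts strictly increasing. -/
def letterStep : Option M.State × (Fin n → ℕ) → Option M.State × (Fin n → ℕ)
  | (some s, p) => (M.step s (some ()), p + Pi.single (M.tape s) 1)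
  | (none, p) => (none, p + 1)

def letterPath (t : ℕ) : Option M.State × (Fin n → ℕ) := M.letterStep^[t] (some M.start, 0)

variable {M}

theorem acceptsFrom_unaryTuple_single_add_iff (s : M.State) (x : Fin n → ℕ) :
    M.AcceptsFrom s (unaryTuple (Pi.single (M.tape s) 1 + x)) ↔
      ∃ t ∈ M.step s (some ()), M.AcceptsFrom t (unaryTuple x) := by
  have hw : unaryTuple (Pi.single (M.tape s) 1 + x) (M.tape s) =
      () :: List.replicate (x (M.tape s)) () := by
    rw [unaryTuple, Pi.add_apply, Pi.single_eq_same, add_comm, List.replicate_succ]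
  rw [acceptsFrom_iff_of_eq_cons rfl hw]
  have hupd : Function.update (unaryTuple (Pi.single (M.tape s) 1 + x)) (M.tape s)
      (List.replicate (x (M.tape s)) ()) = unaryTuple x := by
    funext j
    by_cases hj : j = M.tape s
    · subst hj
      simp [unaryTuple]
    · simp [unaryTuple, hj]
  rw [hupd]

theorem accepts_unaryTuple_letterPath_add_iff (t : ℕ) (x : Fin n → ℕ) :
    M.Accepts (unaryTuple ((M.letterPath t).2 + x)) ↔
      ∃ s ∈ (M.letterPath t).1, M.AcceptsFrom s (unaryTuple x) := by
  induction t generalizing x with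
  | zero => simp [letterPath, Accepts, AcceptsFrom]
  | succ t ih =>
    rw [letterPath, Function.iterate_succ_apply', ← letterPath]
    rcases hc : M.letterPath t with ⟨_ | s, p⟩ <;> rw [hc] at ih
    · simpa [letterStep, add_assoc] using ih (1 + x)
    · rw [letterStep, add_assoc, ih, ← acceptsFrom_unaryTuple_single_add_iff]
      simp

theorem strictMono_letterPath_snd : StrictMono fun t => (M.letterPath t).2 := by
  have : Nonempty (Fin n) := ⟨M.tape M.start⟩
  refine strictMono_nat_of_lt_succ fun t => ?_
  simp only [letterPath, Function.iterate_succ_apply']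
  rcases M.letterStep^[t] (some M.start, 0) with ⟨_ | s, p⟩
  · exact lt_add_of_pos_right p
      (Pi.lt_def.2 ⟨fun _ => Nat.zero_le _, Classical.arbitrary _, by simp⟩)
  · exact lt_add_of_pos_right p (Pi.lt_def.2 ⟨fun _ => Nat.zero_le _, M.tape s, by simp⟩)

theorem exists_lt_forall_accepts_unaryTuple_add_iff (M : SemiSortedAA Unit n) :
    ∃ a c : Fin n → ℕ, a < c ∧
      ∀ x, M.Accepts (unaryTuple (a + x)) ↔ M.Accepts (unaryTuple (c + x)) := by
  have := M.fintype
  obtain ⟨t₀, t₁, hne, heq⟩ := Finite.exists_ne_map_eq_of_infinite fun t => (M.letterPath t).1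
  wlog h : t₀ < t₁ generalizing t₀ t₁
  · exact this t₁ t₀ hne.symm heq.symm (hne.lt_or_gt.resolve_left h)
  refine ⟨(M.letterPath t₀).2, (M.letterPath t₁).2, strictMono_letterPath_snd h, fun x => ?_⟩
  rw [accepts_unaryTuple_letterPath_add_iff, accepts_unaryTuple_letterPath_add_iff, heq]

end SemiSortedAA

/- Points on and just above the diagonal force `c - a` to be diagonal; a point just below the
line `n = 2 m` is then shifted into the cone. -/
theorem not_lt_of_forall_add_mem_cone_iff {a c : Fin 2 → ℕ}
    (h : ∀ x : Fin 2 → ℕ, (a 1 + x 1 ≤ a 0 + x 0 ∧ a 0 + x 0 ≤ 2 * (a 1 + x 1)) ↔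
      (c 1 + x 1 ≤ c 0 + x 0 ∧ c 0 + x 0 ≤ 2 * (c 1 + x 1))) :
    ¬ a < c := by
  rw [Pi.lt_def]
  rintro ⟨hle, l, hl⟩
  have h₁ := h ![a 1 + 1 + c 0, a 0 + 2 + c 0]
  have h₂ := h ![a 1, a 0]
  have h₃ := h ![a 0 + 2 * a 1 + 1, a 0]
  simp only [Matrix.cons_val_zero, Matrix.cons_val_one] at h₁ h₂ h₃
  have := hle 0
  have := hle 1
  fin_cases l <;> simp at hl <;> omega

/-- Quasi-regular languages are not closed under intersection: there are a finite
alphabet `A` and quasi-regular two-variable languages `P`, `Q` over `A` whose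
intersection is not quasi-regular. -/
theorem quasiRegular_not_closed_under_inter :
    ∃ (A : Type) (_ : Fintype A) (P Q : Set (Fin 2 → List A)),
      IsQuasiRegular P ∧ IsQuasiRegular Q ∧ ¬ IsQuasiRegular (P ∩ Q) := by
  refine ⟨Unit, inferInstance, {w | (w 1).length ≤ (w 0).length},
    {w | (w 0).length ≤ 2 * (w 1).length},
    by simpa using isQuasiRegular_length_le_mul_length (by decide : (1 : Fin 2) ≠ 0) 1,
    isQuasiRegular_length_le_mul_length (by decide) 2, ?_⟩
  rintro ⟨M, hM⟩
  obtain ⟨a, c, hac, hsame⟩ := M.exists_lt_forall_accepts_unaryTuple_add_iff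
  refine not_lt_of_forall_add_mem_cone_iff (fun x => ?_) hac
  simpa [← hM, unaryTuple] using hsame x
end

section
/- Let n >= 2 and let L be a quasi-regular n-variable language over a finite alphabet A. Then the (n-1)-variable language {(x_2,...,x_n) in (A*)^{n-1} : there exists x_1 in A* with (x_1, x_2,...,x_n) in L} is weakly regular. -/
/-!
An SAA for the projection simulates `M` on the remaining tapes and guesses the content of the
first tape letter by letter: a transition of `M` out of a state of `S_1` becomes an
`ε`-move. A flag remembers whether the guessed word has already been ended by `$`, so that
the guesses follow the shape `x $` of a padded word.
-/

namespace SemiSortedAA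

variable {A : Type} {n : ℕ}

/-- What is left to read on the first tape: some padded word `x $` while its `$` is unread
(`b = false`), nothing afterwards (`b = true`). -/
def FirstTapeRest : Bool → List (Option A) → Prop
  | false, l => ∃ x : List A, l = x.map some ++ [none]
  | true, l => l = []

theorem firstTapeRest_nil_iff {b : Bool} : FirstTapeRest (A := A) b [] ↔ b = true := by
  cases b <;> simp [FirstTapeRest]

theorem firstTapeRest_cons_iff {b : Bool} {c : Option A} {l : List (Option A)} :
    FirstTapeRest b (c :: l) ↔ b = false ∧ FirstTapeRest c.isNone l := by
  cases b <;> cases c <;>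
    simp only [FirstTapeRest, reduceCtorEq, Bool.true_eq_false, Option.isNone_none,
      Option.isNone_some, true_and, false_and]
  · constructor
    · rintro ⟨_ | _, hx⟩ <;> simp_all
    · rintro rfl
      exact ⟨[], rfl⟩
  · constructor
    · rintro ⟨_ | ⟨_, x⟩, hx⟩ <;> simp_all
    · rintro ⟨x, rfl⟩
      exact ⟨_ :: x, rfl⟩

/-- The states of `S_1` only have `ε`-moves here, so the tape `d` they are assigned to is
irrelevant. -/
def eraseFirstTape (M : SemiSortedAA A (n + 1)) (d : Fin n) : SAA A n where
  State := M.State × Bool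
  fintype := @instFintypeProd _ _ M.fintype _
  start := {(M.start, false)}
  accept := {p | p.1 ∈ M.accept ∧ p.2 = true}
  step p c := {q | M.tape p.1 ≠ 0 ∧ M.step p.1 c = some q.1 ∧ q.2 = p.2}
  eps p := {q | M.tape p.1 = 0 ∧ p.2 = false ∧ ∃ c, M.step p.1 c = some q.1 ∧ q.2 = c.isNone}
  tape p := Fin.cases d id (M.tape p.1)

variable {M : SemiSortedAA A (n + 1)} {d : Fin n}

theorem eraseFirstTape_tape {p : (M.eraseFirstTape d).State} {i : Fin n}
    (h : M.tape p.1 = i.succ) : (M.eraseFirstTape d).tape p = i := by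
  change Fin.cases d id (M.tape p.1) = i
  rw [h, Fin.cases_succ, id]

theorem Run.eraseFirstTape {s f : M.State} {r : Fin (n + 1) → List (Option A)}
    (h : M.Run s r f) {b : Bool} (hb : FirstTapeRest b (r 0)) :
    (M.eraseFirstTape d).Run (s, b) (Fin.tail r) (f, true) := by
  induction h generalizing b with
  | nil s =>
    obtain rfl := firstTapeRest_nil_iff.1 hb
    exact .nil _
  | @step s t f c rest r hstep hr _ ih =>
    rcases Fin.eq_zero_or_eq_succ (M.tape s) with htape | ⟨i, htape⟩
    · rw [htape] at hr
      obtain ⟨rfl, hrest⟩ := firstTapeRest_cons_iff.1 (hr ▸ hb)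
      refine .eps (t := (t, c.isNone)) ⟨htape, rfl, c, hstep, rfl⟩ ?_
      have := ih (b := c.isNone) (by rwa [htape, Function.update_self])
      rwa [htape, Fin.tail_update_zero] at this
    · have htapeN : (M.eraseFirstTape d).tape (s, b) = i := eraseFirstTape_tape htape
      refine .step (t := (t, b)) (rest := rest) ⟨by simp [htape], hstep, rfl⟩ ?_ ?_
      · rwa [htapeN, Fin.tail, ← htape]
      · have := ih (b := b) (by rwa [htape, Function.update_of_ne (Fin.succ_ne_zero i).symm])
        rwa [htape, Fin.tail_update_succ, ← htapeN] at this

theorem Run.of_eraseFirstTape {p q : (M.eraseFirstTape d).State} {r : Fin n → List (Option A)}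
    (h : (M.eraseFirstTape d).Run p r q) (hq : q.2 = true) :
    ∃ l, FirstTapeRest p.2 l ∧ M.Run p.1 (Fin.cons l r) q.1 := by
  induction h with
  | nil p =>
    refine ⟨[], firstTapeRest_nil_iff.2 hq, ?_⟩
    convert Run.nil p.1 using 1
    exact Fin.cons_self_tail fun _ => []
  | @eps p p' q r hε _ ih =>
    obtain ⟨htape, hp, c, hstep, hp'⟩ := hε
    obtain ⟨l, hl, hrun⟩ := ih hq
    refine ⟨c :: l, firstTapeRest_cons_iff.2 ⟨hp, hp' ▸ hl⟩, .step (rest := l) hstep ?_ ?_⟩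
    · rw [htape, Fin.cons_zero]
    · rwa [htape, Fin.update_cons_zero]
  | @step p p' q c rest r hδ hr _ ih =>
    obtain ⟨hne, hstep, hp'⟩ := hδ
    obtain ⟨i, htape⟩ := Fin.exists_succ_eq.2 hne
    have htapeN : (M.eraseFirstTape d).tape p = i := eraseFirstTape_tape htape.symm
    obtain ⟨l, hl, hrun⟩ := ih hq
    refine ⟨l, hp' ▸ hl, .step (rest := rest) hstep ?_ ?_⟩
    · rwa [← htape, Fin.cons_succ, ← htapeN]
    · rwa [← htape, ← Fin.cons_update, ← htapeN]

theorem accepts_eraseFirstTape_iff (v : Fin n → List A) :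
    (M.eraseFirstTape d).Accepts v ↔ ∃ x, M.Accepts (Fin.cons x v) := by
  have hpad (x : List A) :
      (fun i => ((Fin.cons x v : Fin (n + 1) → List A) i).map some ++ [none]) =
        Fin.cons (x.map some ++ [none]) (fun i => (v i).map some ++ [none]) :=
    Fin.comp_cons (fun w : List A => w.map some ++ [none]) x v
  constructor
  · rintro ⟨_, rfl, f, ⟨hf, hf2⟩, hrun⟩
    obtain ⟨l, ⟨x, rfl⟩, hrunM⟩ := Run.of_eraseFirstTape hrun hf2
    exact ⟨x, f.1, hf, by rwa [hpad]⟩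
  · rintro ⟨x, f, hf, hrun⟩
    rw [hpad] at hrun
    exact ⟨_, rfl, (f, true), ⟨hf, rfl⟩, hrun.eraseFirstTape ⟨x, Fin.cons_zero ..⟩⟩

end SemiSortedAA

theorem weaklyRegular_proj_of_quasiRegular_general {A : Type} {n : ℕ}
    (hn : 1 ≤ n) (L : Set (Fin (n + 1) → List A)) (hL : IsQuasiRegular L) :
    IsWeaklyRegular { v : Fin n → List A | ∃ x₁ : List A, Fin.cons x₁ v ∈ L } := by
  obtain ⟨M, hM⟩ := hL
  exact ⟨M.eraseFirstTape ⟨0, hn⟩, fun v => by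
    simp only [Set.mem_ofPred_eq, hM, SemiSortedAA.accepts_eraseFirstTape_iff]⟩

/-- The projection (existential quantification over the first coordinate) of a
quasi-regular language in at least two variables is weakly regular. -/
theorem weaklyRegular_proj_of_quasiRegular {A : Type} [Fintype A] {n : ℕ}
    (hn : 1 ≤ n) (L : Set (Fin (n + 1) → List A)) (hL : IsQuasiRegular L) :
    IsWeaklyRegular { v : Fin n → List A | ∃ x₁ : List A, Fin.cons x₁ v ∈ L } :=
  weaklyRegular_proj_of_quasiRegular_general hn L hL
end

section
/- If L is a quasi-regular 2-variable language over a finite alphabet A, then the 1-variable language {v in A* : there exists u in A* with (u, v) in L} is a regular language over A. -/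
/-!
Fix the tape `j` to project onto. Turn every move made in a state of some `S_i` with `i ≠ j`, and
the move reading the `$` of tape `j`, into an `ε`-move, and let the letter moves on tape `j` keep
their label. Adding one flag per tape that records whether its `$` has been read (so that each
word is read up to its `$` and never beyond) gives a finite `ε`-NFA whose accepting paths are
exactly the accepting runs of the automaton, labelled by the `j`-th word.
-/

theorem εNFA.isRegular_accepts {α σ : Type*} [Fintype σ] (M : εNFA α σ) :
    M.accepts.IsRegular :=
  Language.isRegular_iff.mpr ⟨Set σ, inferInstance, M.toNFA.toDFA, by simp⟩

theorem List.reduceOption_map_some {α : Type*} (l : List α) : (l.map some).reduceOption = l := by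
  simp [List.reduceOption, List.filterMap_map]

theorem List.reduceOption_cons_congr {α : Type*} {c : Option α} {l l' : List (Option α)}
    (h : l.reduceOption = l'.reduceOption) : (c :: l).reduceOption = (c :: l').reduceOption := by
  cases c <;> simp [List.reduceOption_cons_of_some, List.reduceOption_cons_of_none, h]

namespace SemiSortedAA

variable {A : Type} {n : ℕ}

/-- What may remain unread of a padded word `w $`, given whether its `$` has been read. -/
def Unread : Bool → List (Option A) → Prop
  | false, x => ∃ w : List A, x = w.map some ++ [none]
  | true, x => x = []

lemma unread_nil_iff {b : Bool} : Unread (A := A) b [] ↔ b = true := by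
  cases b <;> simp [Unread]

lemma unread_cons_iff {b : Bool} {c : Option A} {x : List (Option A)} :
    Unread b (c :: x) ↔ b = false ∧ Unread c.isNone x := by
  cases b with
  | true => simp [Unread]
  | false =>
    cases c with
    | none =>
      simp only [Unread, Option.isNone_none, true_and]
      constructor
      · rintro ⟨_ | ⟨b, w⟩, hw⟩ <;> simp_all
      · rintro rfl
        exact ⟨[], rfl⟩
    | some a =>
      simp only [Unread, Option.isNone_some, true_and]
      constructor
      · rintro ⟨_ | ⟨b, w⟩, hw⟩
        · simp at hw
        · exact ⟨w, (List.cons.inj hw).2⟩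
      · rintro ⟨w, rfl⟩
        exact ⟨a :: w, rfl⟩

def projection (M : SemiSortedAA A n) (j : Fin n) : εNFA A (M.State × (Fin n → Bool)) where
  step p c := {q | p.2 (M.tape p.1) = false ∧ ∃ a, M.step p.1 a = some q.1 ∧
    q.2 = Function.update p.2 (M.tape p.1) a.isNone ∧ c = if M.tape p.1 = j then a else none}
  start := {(M.start, fun _ => false)}
  accept := {q | q.1 ∈ M.accept ∧ q.2 = fun _ => true}

lemma Run.exists_isPath_projection {M : SemiSortedAA A n} (j : Fin n) {s f : M.State}
    {r : Fin n → List (Option A)} (hrun : M.Run s r f) {d : Fin n → Bool}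
    (hd : ∀ i, Unread (d i) (r i)) :
    ∃ x, x.reduceOption = (r j).reduceOption ∧
      (M.projection j).IsPath (s, d) (f, fun _ => true) x := by
  induction hrun generalizing d with
  | nil s =>
    obtain rfl : d = fun _ => true := funext fun i => unread_nil_iff.mp (hd i)
    exact ⟨[], rfl, .nil _⟩
  | @step s t f c rest r hstep hr _ ih =>
    obtain ⟨hdi, hrest⟩ := unread_cons_iff.mp (hr ▸ hd (M.tape s))
    obtain ⟨x, hx, hpath⟩ := ih (d := Function.update d (M.tape s) c.isNone) fun i => by
      rcases eq_or_ne i (M.tape s) with rfl | hi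
      · simpa using hrest
      · simpa [hi] using hd i
    refine ⟨(if M.tape s = j then c else none) :: x, ?_,
      .cons _ _ _ _ _ ⟨hdi, c, hstep, rfl, rfl⟩ hpath⟩
    rcases eq_or_ne (M.tape s) j with hj | hj
    · subst hj
      simpa [hr] using List.reduceOption_cons_congr (c := c) (by simpa using hx)
    · simpa [hj, Ne.symm hj, List.reduceOption_cons_of_none] using hx

lemma exists_run_of_isPath_projection {M : SemiSortedAA A n} {j : Fin n}
    {p : M.State × (Fin n → Bool)} {f : M.State} {x : List (Option A)}
    (h : (M.projection j).IsPath p (f, fun _ => true) x) :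
    ∃ r, (∀ i, Unread (p.2 i) (r i)) ∧ (r j).reduceOption = x.reduceOption ∧
      M.Run p.1 r f := by
  generalize hq : (f, fun _ : Fin n => true) = q at h
  induction h with
  | nil =>
    subst hq
    exact ⟨fun _ => [], fun _ => rfl, rfl, .nil f⟩
  | cons t p q c x hstep _ ih =>
    obtain ⟨r, hr, hrj, hrun⟩ := ih hq
    obtain ⟨hdi, a, ha, hflags, rfl⟩ := hstep
    refine ⟨Function.update r (M.tape p.1) (a :: r (M.tape p.1)), fun i => ?_, ?_,
      .step (rest := r (M.tape p.1)) ha (by simp) (by simpa using hrun)⟩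
    · rcases eq_or_ne i (M.tape p.1) with rfl | hi
      · simpa [unread_cons_iff, hdi, hflags] using hr (M.tape p.1)
      · simpa [hi, hflags] using hr i
    · rcases eq_or_ne (M.tape p.1) j with rfl | hj
      · simpa using List.reduceOption_cons_congr (c := a) hrj
      · simpa [hj, Ne.symm hj, List.reduceOption_cons_of_none] using hrj

theorem mem_projection_accepts_iff (M : SemiSortedAA A n) (j : Fin n) (v : List A) :
    v ∈ (M.projection j).accepts ↔ ∃ w, w j = v ∧ M.Accepts w := by
  rw [εNFA.mem_accepts_iff_exists_path]
  constructor
  · rintro ⟨_, ⟨f, _⟩, x, rfl, ⟨hf, rfl⟩, rfl, hpath⟩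
    obtain ⟨r, hr, hrj, hrun⟩ := exists_run_of_isPath_projection hpath
    choose w hw using hr
    obtain rfl : r = fun i => (w i).map some ++ [none] := funext hw
    refine ⟨w, ?_, f, hf, hrun⟩
    simpa [List.reduceOption_append, List.reduceOption_map_some] using hrj
  · rintro ⟨w, rfl, f, hf, hrun⟩
    obtain ⟨x, hx, hpath⟩ :=
      hrun.exists_isPath_projection j (d := fun _ => false) fun i => ⟨w i, rfl⟩
    refine ⟨_, _, x, rfl, ⟨hf, rfl⟩, ?_, hpath⟩
    simpa [List.reduceOption_append, List.reduceOption_map_some] using hx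

end SemiSortedAA

theorem IsQuasiRegular.isRegular_image_eval {A : Type} {n : ℕ} {L : Set (Fin n → List A)}
    (hL : IsQuasiRegular L) (j : Fin n) :
    Language.IsRegular ((fun w => w j) '' L : Set (List A)) := by
  obtain ⟨M, hM⟩ := hL
  have := M.fintype
  have hproj : (M.projection j).accepts = (fun w => w j) '' L := by
    ext v
    rw [SemiSortedAA.mem_projection_accepts_iff]
    exact ⟨fun ⟨w, hwj, hw⟩ => ⟨w, (hM w).2 hw, hwj⟩,
      fun ⟨w, hw, hwj⟩ => ⟨w, hwj, (hM w).1 hw⟩⟩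
  exact hproj ▸ (M.projection j).isRegular_accepts

theorem regular_exists_of_quasiRegular_general {A : Type}
    (L : Set (Fin 2 → List A)) (hL : IsQuasiRegular L) :
    Language.IsRegular { v : List A | ∃ u : List A, ![u, v] ∈ L } := by
  have hproj : { v : List A | ∃ u : List A, ![u, v] ∈ L } = (fun w => w 1) '' L := by
    ext v
    constructor
    · rintro ⟨u, hu⟩
      exact ⟨_, hu, rfl⟩
    · rintro ⟨w, hw, rfl⟩
      exact ⟨w 0, by rwa [← FinVec.etaExpand_eq w] at hw⟩
  exact hproj ▸ hL.isRegular_image_eval 1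

/-- If `L` is a quasi-regular two-variable language over a finite alphabet `A`,
then `{v : ∃ u, (u, v) ∈ L}` is a regular (one-variable) language over `A`. -/
theorem regular_exists_of_quasiRegular {A : Type} [Fintype A]
    (L : Set (Fin 2 → List A)) (hL : IsQuasiRegular L) :
    Language.IsRegular { v : List A | ∃ u : List A, ![u, v] ∈ L } :=
  regular_exists_of_quasiRegular_general L hL
end

section
/- Let L be an n-variable weakly regular language over a finite alphabet A. Then there exist a finite alphabet B containing A and an (n+1)-variable quasi-regular language M over B such that L = {(x_1,...,x_n) in (A*)^n : there exists x_0 in B* with (x_0, x_1,...,x_n) in M}. That is, every weakly regular language is the projection of a quasi-regular language in one more variable. -/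
/-!
An accepting run of a non-deterministic SAA is determined by a finite sequence of
choices: a start state, then ε-moves and transitions. The extra tape `0` carries such a
sequence. The deterministic automaton reads it in tape-`0` states, and checks each guessed
transition `s --c--> t` by moving to a state of `S_{tape s}` that can only read the
letter `c` from that tape; after the final `$` of tape `0` it accepts only if the
simulated state is accepting, and from then on it cannot move.
-/

def liftTapes {A C : Type} {n : ℕ} (r : Fin n → List (Option A)) :
    Fin n → List (Option (A ⊕ C)) :=
  fun i => (r i).map (Option.map Sum.inl)

theorem liftTapes_update {A C : Type} {n : ℕ} (r : Fin n → List (Option A)) (i : Fin n)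
    (l : List (Option A)) :
    liftTapes (C := C) (Function.update r i l) =
      Function.update (liftTapes r) i (l.map (Option.map Sum.inl)) := by
  funext j
  exact Function.apply_update (fun (_ : Fin n) l => l.map (Option.map (Sum.inl (β := C))))
    r i l j

namespace SAA

variable {A : Type} {n : ℕ} (N : SAA A n)

instance : Fintype N.State := N.fintype

/-- Letters of the guess tape: `jump t` chooses `t` as start state or as target of an ε-move,
`read c t` chooses a `c`-transition to `t`. -/
inductive Choice
  | jump (t : N.State)
  | read (c : Option A) (t : N.State)
  deriving Fintype

inductive DetState
  | init
  | sim (s : N.State)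
  | pending (s : N.State) (c : Option A) (t : N.State)
  | done
  deriving Fintype

variable {N}

inductive DetMove : N.DetState → Option (A ⊕ N.Choice) → N.DetState → Prop
  | start {t : N.State} : t ∈ N.start → DetMove .init (some (.inr (.jump t))) (.sim t)
  | eps {s t : N.State} : t ∈ N.eps s → DetMove (.sim s) (some (.inr (.jump t))) (.sim t)
  | choose {s t : N.State} {c : Option A} :
      t ∈ N.step s c → DetMove (.sim s) (some (.inr (.read c t))) (.pending s c t)
  | read {s t : N.State} {c : Option A} : DetMove (.pending s c t) (c.map .inl) (.sim t)
  | accept {s : N.State} : s ∈ N.accept → DetMove (.sim s) none .done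

theorem DetMove.unique {q q₁ q₂ : N.DetState} {x : Option (A ⊕ N.Choice)}
    (h₁ : DetMove q x q₁) (h₂ : DetMove q x q₂) : q₁ = q₂ := by
  cases h₁ <;> cases h₂ <;> rfl

def DetState.tape : N.DetState → Fin (n + 1)
  | .pending s _ _ => (N.tape s).succ
  | _ => 0

@[simp] theorem DetState.tape_init : (DetState.init : N.DetState).tape = 0 := rfl

@[simp] theorem DetState.tape_sim (s : N.State) : (DetState.sim s).tape = 0 := rfl

@[simp] theorem DetState.tape_pending (s : N.State) (c : Option A) (t : N.State) :
    (DetState.pending s c t).tape = (N.tape s).succ := rfl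

open scoped Classical in
variable (N) in
noncomputable def det [Fintype A] : SemiSortedAA (A ⊕ N.Choice) (n + 1) where
  State := N.DetState
  fintype := inferInstance
  start := .init
  accept := {.done}
  step q x := if h : ∃ q', DetMove q x q' then some h.choose else none
  tape := DetState.tape

variable (N) in
/-- The invariant of the backward simulation: what reaching `q` with the `N`-tapes `r` left
guarantees about `N`. -/
def CanFinish : N.DetState → (Fin n → List (Option A)) → Prop
  | .init, r => ∃ s ∈ N.start, ∃ f ∈ N.accept, N.Run s r f
  | .sim s, r => ∃ f ∈ N.accept, N.Run s r f
  | .pending s c t, r => ∃ rest, r (N.tape s) = c :: rest ∧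
      ∃ f ∈ N.accept, N.Run t (Function.update r (N.tape s) rest) f
  | .done, r => r = fun _ => []

variable [Fintype A]

theorem det_step_eq_some_iff {q q' : N.DetState} {x : Option (A ⊕ N.Choice)} :
    N.det.step q x = some q' ↔ DetMove q x q' := by
  simp only [det]
  split_ifs with h
  · exact ⟨fun h' => Option.some.inj h' ▸ h.choose_spec,
      fun h' => congrArg some (h.choose_spec.unique h')⟩
  · exact ⟨nofun, fun h' => (h ⟨q', h'⟩).elim⟩

theorem det_run_of_move {q q' f : N.DetState} {x : Option (A ⊕ N.Choice)}
    {rest : List (Option (A ⊕ N.Choice))}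
    {R : Fin (n + 1) → List (Option (A ⊕ N.Choice))} (hm : DetMove q x q')
    (hR : R q.tape = x :: rest) (h : N.det.Run q' (Function.update R q.tape rest) f) :
    N.det.Run q R f :=
  .step (det_step_eq_some_iff.2 hm) hR h

theorem exists_det_run_of_run {s f : N.State} {r : Fin n → List (Option A)}
    (h : N.Run s r f) (hf : f ∈ N.accept) :
    ∃ g : List (A ⊕ N.Choice),
      N.det.Run (.sim s) (Fin.cons (g.map some ++ [none]) (liftTapes r)) .done := by
  induction h with
  | nil s =>
    refine ⟨[], det_run_of_move (.accept hf) rfl ?_⟩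
    rw [DetState.tape_sim, Fin.update_cons_zero]
    have hnil : (Fin.cons [] (liftTapes fun _ => []) :
        Fin (n + 1) → List (Option (A ⊕ N.Choice))) = fun _ => [] := by
      funext j
      cases j using Fin.cases <;> rfl
    exact hnil ▸ .nil _
  | @eps s t f r ht _ ih =>
    obtain ⟨g, hg⟩ := ih hf
    refine ⟨.inr (.jump t) :: g, det_run_of_move (.eps ht) rfl ?_⟩
    rwa [DetState.tape_sim, Fin.update_cons_zero]
  | @step s t f c rest r ht hr _ ih =>
    obtain ⟨g, hg⟩ := ih hf
    refine ⟨.inr (.read c t) :: g, det_run_of_move (.choose ht) rfl ?_⟩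
    rw [DetState.tape_sim, Fin.update_cons_zero]
    refine det_run_of_move (rest := rest.map (Option.map Sum.inl)) .read
      (by simp [liftTapes, hr]) ?_
    rwa [DetState.tape_pending, ← Fin.cons_update, ← liftTapes_update]

theorem canFinish_of_det_run {q f : N.det.State}
    {R : Fin (n + 1) → List (Option (A ⊕ N.Choice))} (h : N.det.Run q R f)
    (hf : f = DetState.done) {x : List (Option (A ⊕ N.Choice))} {r : Fin n → List (Option A)}
    (hR : R = Fin.cons x (liftTapes r)) : N.CanFinish q r := by
  induction h generalizing x r with
  | nil q =>
    subst hf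
    funext i
    simpa [liftTapes] using (congrFun hR i.succ).symm
  | @step q t f c rest R hstep hc _ ih =>
    subst hR
    cases det_step_eq_some_iff.1 hstep with
    | start ht => exact ⟨_, ht, ih hf (Fin.update_cons_zero ..)⟩
    | eps ht =>
      obtain ⟨f', hf', hrun⟩ := ih hf (Fin.update_cons_zero ..)
      exact ⟨f', hf', .eps ht hrun⟩
    | choose ht =>
      obtain ⟨rest', hr', f', hf', hrun⟩ := ih hf (Fin.update_cons_zero ..)
      exact ⟨f', hf', .step ht hr' hrun⟩
    | @read s t c =>
      obtain ⟨c', rest', hr, hc', rfl⟩ := List.map_eq_cons_iff.1 hc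
      obtain rfl := Option.map_injective Sum.inl_injective hc'
      refine ⟨rest', hr, ih hf (x := x) ?_⟩
      rw [liftTapes_update, Fin.cons_update]
      rfl
    | @accept s hs =>
      obtain rfl : r = fun _ => [] := ih hf (Fin.update_cons_zero ..)
      exact ⟨s, hs, .nil s⟩

theorem accepts_iff_exists_det_accepts (w : Fin n → List A) :
    N.Accepts w ↔ ∃ x₀ : List (A ⊕ N.Choice),
      N.det.Accepts (Fin.cons x₀ fun i => (w i).map Sum.inl) := by
  have htapes : ∀ x₀ : List (A ⊕ N.Choice),
      (fun j => ((Fin.cons x₀ fun i => (w i).map Sum.inl :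
          Fin (n + 1) → List (A ⊕ N.Choice)) j).map some ++ [none]) =
        Fin.cons (x₀.map some ++ [none]) (liftTapes fun i => (w i).map some ++ [none]) := by
    intro x₀
    funext j
    cases j using Fin.cases <;> simp [liftTapes]
  simp only [SemiSortedAA.Accepts, htapes]
  constructor
  · rintro ⟨s₀, hs₀, f, hf, hrun⟩
    obtain ⟨g, hg⟩ := exists_det_run_of_run hrun hf
    refine ⟨.inr (.jump s₀) :: g, .done, rfl,
      det_run_of_move (q := .init) (.start hs₀) rfl ?_⟩
    rwa [DetState.tape_init, Fin.update_cons_zero]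
  · rintro ⟨x₀, f, hf, hrun⟩
    exact canFinish_of_det_run hrun hf rfl

end SAA

theorem weaklyRegular_is_proj_of_quasiRegular_general {A : Type} [Fintype A] {n : ℕ}
    (L : Set (Fin n → List A)) (hL : IsWeaklyRegular L) :
    ∃ (B : Type) (_ : Fintype B) (ι : A ↪ B) (M : Set (Fin (n + 1) → List B)),
      IsQuasiRegular M ∧
      ∀ w : Fin n → List A,
        w ∈ L ↔ ∃ x₀ : List B, Fin.cons x₀ (fun i => (w i).map ι) ∈ M := by
  obtain ⟨N, hN⟩ := hL
  refine ⟨A ⊕ N.Choice, inferInstance, .inl, {v | N.det.Accepts v},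
    ⟨N.det, fun _ => Iff.rfl⟩, fun w => ?_⟩
  exact (hN w).trans (SAA.accepts_iff_exists_det_accepts w)

/-- Every weakly regular `n`-variable language over a finite alphabet `A` is the
projection of a quasi-regular language in one more variable: there are a finite
alphabet `B` containing `A` (via an embedding `ι`) and a quasi-regular
`(n+1)`-variable language `M` over `B` such that `L` consists exactly of the
tuples `(x_1, …, x_n)` of `A`-words with `(x_0, x_1, …, x_n) ∈ M` for some
`B`-word `x_0`. -/
theorem weaklyRegular_is_proj_of_quasiRegular {A : Type} [Fintype A] {n : ℕ}
    (hn : 1 ≤ n) (L : Set (Fin n → List A)) (hL : IsWeaklyRegular L) :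
    ∃ (B : Type) (_ : Fintype B) (ι : A ↪ B) (M : Set (Fin (n + 1) → List B)),
      IsQuasiRegular M ∧
      ∀ w : Fin n → List A,
        w ∈ L ↔ ∃ x₀ : List B, Fin.cons x₀ (fun i => (w i).map ι) ∈ M :=
  weaklyRegular_is_proj_of_quasiRegular_general L hL
end
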